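/- arXiv:2211.00954 — 5 statements merged into one kernel-verified Lean document; each statement's English description precedes it below -/
import Mathlib

section
/- Let d ≥ 2 and for each i = 1,…,d let K_i ⊆ ℝ be the attractor of an IFS {φ_{k,i}(x) = r_{k,i}x + a_{k,i}}_{k=1}^{ℓ_i} with ℓ_i ≥ 2 and r_{k,i} ∈ (0,1), let A_i = inf K_i, B_i = sup K_i with A_i < B_i, and assume the maps are ordered so that φ_{k,i}(A_i) ≤ φ_{k+1,i}(A_i) for 1 ≤ k ≤ ℓ_i − 1. Set s_min = min over all i,k of r_{k,i}. Let f : ℝ^d → ℝ be C¹. If for every point x ∈ [A_1,B_1] × ⋯ × [A_d,B_d], every i ∈ {1,…,d} and every k ∈ {1,…,ℓ_i − 1} one has ∂_{x_i} f(x) > 0 and s_min·(Σ_{j≠i} (B_j − A_j)·∂_{x_j} f(x)) + (φ_{k,i}(B_i) − φ_{k+1,i}(A_i))·∂_{x_i} f(x) ≥ 0, then f(K_1,…,K_d) = {f(x_1,…,x_d) : x_i ∈ K_i for each i} is a finite union of closed intervals: there exist n ∈ ℕ and reals c_1 ≤ d_1, …, c_n ≤ d_n such that f(K_1,…,K_d)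 = ⋃_{j=1}^n [c_j, d_j]. -/
/-!
The partial derivatives of `f` are positive on the box `∏ [Aᵢ, Bᵢ]`, so `f` is monotone there and
`f(K₁, …, K_d) ⊆ [f A, f B]`; in fact equality holds. Given `y` in this interval, keep a product
of cylinders `∏ (ρᵢ Kᵢ + cᵢ)` whose lower and upper corners bracket `y` under `f`. Split the
coordinate with the largest scale `ρᵢ` into its `ℓᵢ` pieces: the pieces' lower corners start at the
old lower corner, some upper corner is the old upper corner, and the derivative condition (via the
mean value theorem) puts `f` of the upper corner of piece `k` above `f` of the lower corner of
piece `k + 1`, so some piece still brackets `y`. Splitting the largest scale keeps the scales within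
a factor `s_min` of each other while their product decays geometrically, so all scales tend to `0`
and a limit point `x ∈ ∏ Kᵢ` of the lower corners satisfies `f x = y`.
-/

open Set Filter Topology Function

theorem Fin.monotone_of_le_succ {α : Type*} [Preorder α] {n : ℕ} {g : Fin n → α}
    (h : ∀ (k : Fin n) (hk : (k : ℕ) + 1 < n), g k ≤ g ⟨k + 1, hk⟩) : Monotone g := by
  cases n with
  | zero => exact fun k => k.elim0
  | succ n => exact Fin.monotone_iff_le_succ.2 fun k => h k.castSucc (by simp)

theorem Fin.exists_le_le_of_chain {α : Type*} [LinearOrder α] {n : ℕ} {u v : Fin n → α} {y : α}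
    (hchain : ∀ (k : Fin n) (hk : (k : ℕ) + 1 < n), u ⟨k + 1, hk⟩ ≤ v k)
    (hu : ∀ k : Fin n, (k : ℕ) = 0 → u k ≤ y) (m : Fin n) (hv : y ≤ v m) :
    ∃ k, u k ≤ y ∧ y ≤ v k := by
  obtain ⟨m, hm⟩ := m
  induction m with
  | zero => exact ⟨_, hu _ rfl, hv⟩
  | succ j ih =>
    by_cases hy : u ⟨j + 1, hm⟩ ≤ y
    · exact ⟨_, hy, hv⟩
    · exact ih (by omega) ((not_le.1 hy).le.trans (hchain ⟨j, by omega⟩ hm))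

theorem ContinuousLinearMap.apply_eq_sum_mul_single {ι : Type*} [Fintype ι] [DecidableEq ι]
    (L : (ι → ℝ) →L[ℝ] ℝ) (v : ι → ℝ) : L v = ∑ j, v j * L (Pi.single j 1) := by
  conv_lhs => rw [pi_eq_sum_univ' v, map_sum]
  simp only [map_smul, smul_eq_mul]

theorem le_of_sum_mul_fderiv_nonneg {ι : Type*} [Fintype ι] [DecidableEq ι]
    {f : (ι → ℝ) → ℝ} (hf : Differentiable ℝ f) {s : Set (ι → ℝ)} (hs : Convex ℝ s)
    {x z : ι → ℝ} (hx : x ∈ s) (hz : z ∈ s)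
    (h : ∀ p ∈ s, 0 ≤ ∑ j, (z j - x j) * fderiv ℝ f p (Pi.single j 1)) : f x ≤ f z := by
  obtain ⟨p, hp, hfp⟩ := domain_mvt (fun p _ => (hf p).hasFDerivAt.hasFDerivWithinAt) hs hx hz
  have := h p (hs.segment_subset hx hz hp)
  rw [ContinuousLinearMap.apply_eq_sum_mul_single] at hfp
  simp only [Pi.sub_apply] at hfp
  linarith

theorem monotoneOn_of_fderiv_single_nonneg {ι : Type*} [Fintype ι] [DecidableEq ι]
    {f : (ι → ℝ) → ℝ} (hf : Differentiable ℝ f) {s : Set (ι → ℝ)} (hs : Convex ℝ s)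
    (h : ∀ p ∈ s, ∀ j, 0 ≤ fderiv ℝ f p (Pi.single j 1)) : MonotoneOn f s :=
  fun _ hx _ hz hxz => le_of_sum_mul_fderiv_nonneg hf hs hx hz fun p hp =>
    Finset.sum_nonneg fun j _ => mul_nonneg (sub_nonneg.2 (hxz j)) (h p hp j)

theorem IsCompact.exists_apply_eq_of_tendsto_sub {E α : Type*} [NormedAddCommGroup E]
    [LinearOrder α] [TopologicalSpace α] [OrderClosedTopology α]
    {S : Set E} (hS : IsCompact S) {f : E → α} (hf : Continuous f) {p q : ℕ → E} {y : α}
    (hp : ∀ n, p n ∈ S) (hpq : Tendsto (fun n => q n - p n) atTop (𝓝 0))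
    (hlow : ∀ n, f (p n) ≤ y) (hup : ∀ n, y ≤ f (q n)) : ∃ x ∈ S, f x = y := by
  obtain ⟨x, hxS, φ, hφ, hpx⟩ := hS.tendsto_subseq hp
  have hqx : Tendsto (fun n => q (φ n)) atTop (𝓝 x) := by
    simpa using hpx.add ((hpq.comp hφ.tendsto_atTop))
  exact ⟨x, hxS, le_antisymm
    (le_of_tendsto ((hf.tendsto x).comp hpx) (Eventually.of_forall fun n => hlow (φ n)))
    (ge_of_tendsto ((hf.tendsto x).comp hqx) (Eventually.of_forall fun n => hup (φ n)))⟩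
theorem Finite.exists_mem_Ico_forall_le {κ : Type*} [Finite κ] {g : κ → ℝ} (h : ∀ k, g k < 1) :
    ∃ m ∈ Ico (0 : ℝ) 1, ∀ k, g k ≤ m := by
  rcases isEmpty_or_nonempty κ with _ | _
  · exact ⟨0, ⟨le_rfl, one_pos⟩, isEmptyElim⟩
  · obtain ⟨k, hk⟩ := Finite.exists_max g
    exact ⟨max 0 (g k), ⟨le_max_left _ _, max_lt one_pos (h k)⟩,
      fun j => (hk j).trans (le_max_right _ _)⟩

section SelfSimilar

variable {κ : Type*} {K : Set ℝ} {r a : κ → ℝ}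

theorem mapsTo_of_eq_iUnion_image (hK : K = ⋃ k, (fun x => r k * x + a k) '' K) (k : κ) :
    MapsTo (fun x => r k * x + a k) K K := fun x hx => by
  rw [hK]
  exact mem_iUnion.2 ⟨k, x, hx, rfl⟩

theorem exists_map_eq_of_isLeast (hK : K = ⋃ k, (fun x => r k * x + a k) '' K)
    (hr : ∀ k, 0 ≤ r k) {A : ℝ} (hA : IsLeast K A) : ∃ k, r k * A + a k = A := by
  obtain ⟨k, x, hx, hxA⟩ := mem_iUnion.1 (hK ▸ hA.1)
  refine ⟨k, le_antisymm ?_ (hA.2 (mapsTo_of_eq_iUnion_image hK k hA.1))⟩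
  nlinarith [hA.2 hx, hr k]

theorem exists_map_eq_of_isGreatest (hK : K = ⋃ k, (fun x => r k * x + a k) '' K)
    (hr : ∀ k, 0 ≤ r k) {B : ℝ} (hB : IsGreatest K B) : ∃ k, r k * B + a k = B := by
  obtain ⟨k, x, hx, hxB⟩ := mem_iUnion.1 (hK ▸ hB.1)
  refine ⟨k, le_antisymm (hB.2 (mapsTo_of_eq_iUnion_image hK k hB.1)) ?_⟩
  nlinarith [hB.2 hx, hr k]

theorem map_eq_of_isLeast_of_monotone {n : ℕ} {K : Set ℝ} {r a : Fin n → ℝ}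
    (hK : K = ⋃ k, (fun x => r k * x + a k) '' K) (hr : ∀ k, 0 ≤ r k) {A : ℝ} (hA : IsLeast K A)
    (hmono : Monotone fun k => r k * A + a k) {k₀ : Fin n} (hk₀ : (k₀ : ℕ) = 0) :
    r k₀ * A + a k₀ = A := by
  obtain ⟨k, hk⟩ := exists_map_eq_of_isLeast hK hr hA
  refine le_antisymm ?_ (hA.2 (mapsTo_of_eq_iUnion_image hK k₀ hA.1))
  calc r k₀ * A + a k₀ ≤ r k * A + a k := hmono (Fin.le_iff_val_le_val.2 (by omega))
    _ = A := hk

end SelfSimilar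

theorem apply_update_le_apply_update {ι : Type*} [Fintype ι] [DecidableEq ι]
    {f : (ι → ℝ) → ℝ} (hf : Differentiable ℝ f) {A B ρ c : ι → ℝ} (hAB : A ≤ B) {i₀ : ι}
    {smin u v : ℝ} (hρ : ∀ j, smin * ρ i₀ ≤ ρ j) (hρ₀ : 0 ≤ ρ i₀)
    (hx : update (ρ * A + c) i₀ (ρ i₀ * u + c i₀) ∈ Icc A B)
    (hz : update (ρ * B + c) i₀ (ρ i₀ * v + c i₀) ∈ Icc A B)
    (hD : ∀ p ∈ Icc A B, ∀ j, 0 ≤ fderiv ℝ f p (Pi.single j 1))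
    (h : ∀ p ∈ Icc A B, 0 ≤ smin * ∑ j ∈ Finset.univ.erase i₀, (B j - A j) *
      fderiv ℝ f p (Pi.single j 1) + (v - u) * fderiv ℝ f p (Pi.single i₀ 1)) :
    f (update (ρ * A + c) i₀ (ρ i₀ * u + c i₀)) ≤ f (update (ρ * B + c) i₀ (ρ i₀ * v + c i₀)) := by
  refine le_of_sum_mul_fderiv_nonneg hf (convex_Icc A B) hx hz fun p hp => ?_
  set D := fun j => fderiv ℝ f p (Pi.single j 1)
  -- off `i₀` the increment `ρ j * (B j - A j)` dominates `smin * ρ i₀ * (B j - A j)`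
  have hother : ρ i₀ * (smin * ∑ j ∈ Finset.univ.erase i₀, (B j - A j) * D j) ≤
      ∑ j ∈ Finset.univ.erase i₀, (update (ρ * B + c) i₀ (ρ i₀ * v + c i₀) j -
        update (ρ * A + c) i₀ (ρ i₀ * u + c i₀) j) * D j := by
    rw [Finset.mul_sum, Finset.mul_sum]
    refine Finset.sum_le_sum fun j hj => ?_
    simp only [update_of_ne (Finset.ne_of_mem_erase hj), Pi.add_apply, Pi.mul_apply]
    nlinarith [mul_le_mul_of_nonneg_right (hρ j) (mul_nonneg (sub_nonneg.2 (hAB j)) (hD p hp j))]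
  rw [← Finset.add_sum_erase _ _ (Finset.mem_univ i₀)]
  simp only [update_self]
  nlinarith [mul_nonneg hρ₀ (h p hp)]

theorem update_mul_add_update {ι : Type*} [DecidableEq ι] (ρ c P : ι → ℝ) (i : ι) (s t : ℝ) :
    update ρ i (ρ i * s) * P + update c i (ρ i * t + c i)
      = update (ρ * P + c) i (ρ i * (s * P i + t) + c i) := by
  funext j
  rcases eq_or_ne j i with rfl | hj
  · simp only [Pi.add_apply, Pi.mul_apply, update_self]
    ring
  · simp [hj]

theorem prod_update_mul_self {ι M : Type*} [CommMonoid M] [Fintype ι] [DecidableEq ι]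
    (ρ : ι → M) (i : ι) (s : M) : ∏ j, update ρ i (ρ i * s) j = s * ∏ j, ρ j := by
  rw [Finset.prod_update_of_mem (Finset.mem_univ i), Finset.sdiff_singleton_eq_erase,
    ← Finset.mul_prod_erase _ ρ (Finset.mem_univ i)]
  ac_rfl

theorem image_pi_subset_Icc {ι : Type*} [Fintype ι] [DecidableEq ι] {K : ι → Set ℝ}
    {A B : ι → ℝ} (hA : ∀ i, IsLeast (K i) (A i)) (hB : ∀ i, IsGreatest (K i) (B i))
    {f : (ι → ℝ) → ℝ} (hf : Differentiable ℝ f)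
    (hD : ∀ p ∈ Icc A B, ∀ j, 0 ≤ fderiv ℝ f p (Pi.single j 1)) :
    f '' univ.pi K ⊆ Icc (f A) (f B) := by
  rintro _ ⟨x, hx, rfl⟩
  have hmono := monotoneOn_of_fderiv_single_nonneg hf (convex_Icc A B) hD
  have hxA : A ≤ x := fun i => (hA i).2 (hx i trivial)
  have hxB : x ≤ B := fun i => (hB i).2 (hx i trivial)
  exact ⟨hmono (left_mem_Icc.2 (hxA.trans hxB)) ⟨hxA, hxB⟩ hxA,
    hmono ⟨hxA, hxB⟩ (right_mem_Icc.2 (hxA.trans hxB)) hxB⟩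

section Bracket

variable {ι : Type*} (K : ι → Set ℝ) (A B : ι → ℝ) (smin : ℝ)
  (f : (ι → ℝ) → ℝ) (y : ℝ)

/-- `(ρ, c)` encodes the cylinder `∏ᵢ (ρᵢ Kᵢ + cᵢ)`, whose extreme corners are `ρ * A + c` and
`ρ * B + c`. -/
structure IsBracket (ρ c : ι → ℝ) : Prop where
  pos : ∀ i, 0 < ρ i
  balanced : ∀ i j, smin * ρ j ≤ ρ i
  mapsTo : ∀ i, MapsTo (fun x => ρ i * x + c i) (K i) (K i)
  apply_lower_le : f (ρ * A + c) ≤ y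
  le_apply_upper : y ≤ f (ρ * B + c)

variable {K A B smin f y} {ρ c : ι → ℝ}

theorem IsBracket.update_mem_pi [DecidableEq ι] (hb : IsBracket K A B smin f y ρ c) {P : ι → ℝ}
    (hP : P ∈ univ.pi K) (i : ι) {x : ℝ} (hx : x ∈ K i) :
    update (ρ * P + c) i (ρ i * x + c i) ∈ univ.pi K := by
  intro j _
  rcases eq_or_ne j i with rfl | hj
  · simpa using hb.mapsTo j hx
  · simpa [hj] using hb.mapsTo j (hP j trivial)

theorem IsBracket.refine [DecidableEq ι] (hb : IsBracket K A B smin f y ρ c) (hsmin : 0 ≤ smin)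
    {i₀ : ι} (hi₀ : ∀ j, ρ j ≤ ρ i₀) {s t : ℝ} (hs : s ∈ Ioc 0 1) (hsmin_le : smin ≤ s)
    (hst : MapsTo (fun x => s * x + t) (K i₀) (K i₀))
    (hlow : f (update (ρ * A + c) i₀ (ρ i₀ * (s * A i₀ + t) + c i₀)) ≤ y)
    (hup : y ≤ f (update (ρ * B + c) i₀ (ρ i₀ * (s * B i₀ + t) + c i₀))) :
    IsBracket K A B smin f y (update ρ i₀ (ρ i₀ * s)) (update c i₀ (ρ i₀ * t + c i₀)) where
  pos i := by
    rcases eq_or_ne i i₀ with rfl | hi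
    · simpa using mul_pos (hb.pos i) hs.1
    · simpa [hi] using hb.pos i
  balanced i j := by
    have hle : ∀ k, update ρ i₀ (ρ i₀ * s) k ≤ ρ k := fun k => by
      rcases eq_or_ne k i₀ with rfl | hk
      · simpa using mul_le_of_le_one_right (hb.pos k).le hs.2
      · simp [hk]
    rcases eq_or_ne i i₀ with rfl | hi
    · rw [update_self]
      calc smin * update ρ i (ρ i * s) j ≤ smin * ρ i :=
            mul_le_mul_of_nonneg_left ((hle j).trans (hi₀ j)) hsmin
        _ ≤ ρ i * s := by nlinarith [hb.pos i]
    · rw [update_of_ne hi]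
      exact (mul_le_mul_of_nonneg_left (hle j) hsmin).trans (hb.balanced i j)
  mapsTo i x hx := by
    rcases eq_or_ne i i₀ with rfl | hi
    · simpa [mul_assoc, mul_add, add_assoc] using hb.mapsTo i (hst hx)
    · simpa [hi] using hb.mapsTo i hx
  apply_lower_le := by rwa [update_mul_add_update]
  le_apply_upper := by rwa [update_mul_add_update]

theorem IsBracket.exists_next [Fintype ι] [DecidableEq ι] [Nonempty ι] {ℓ : ι → ℕ}
    {r a : (i : ι) → Fin (ℓ i) → ℝ} {rmax : ℝ}
    (hb : IsBracket K A B smin f y ρ c)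
    (hr : ∀ i k, r i k ∈ Ioo (0 : ℝ) 1) (hrmax : ∀ i k, r i k ≤ rmax)
    (hK : ∀ i, K i = ⋃ k, (fun x => r i k * x + a i k) '' K i)
    (hA : ∀ i, IsLeast (K i) (A i)) (hB : ∀ i, IsGreatest (K i) (B i))
    (horder : ∀ i, Monotone fun k => r i k * A i + a i k)
    (hsmin : 0 ≤ smin) (hsmin_le : ∀ i k, smin ≤ r i k)
    (hf : Differentiable ℝ f) (hD : ∀ p ∈ Icc A B, ∀ j, 0 ≤ fderiv ℝ f p (Pi.single j 1))
    (hcond : ∀ p ∈ Icc A B, ∀ i (k : Fin (ℓ i)) (hk : (k : ℕ) + 1 < ℓ i),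
      0 ≤ smin * ∑ j ∈ Finset.univ.erase i, (B j - A j) * fderiv ℝ f p (Pi.single j 1)
        + ((r i k * B i + a i k) - (r i ⟨k + 1, hk⟩ * A i + a i ⟨k + 1, hk⟩))
          * fderiv ℝ f p (Pi.single i 1)) :
    ∃ ρ' c', IsBracket K A B smin f y ρ' c' ∧ ∏ i, ρ' i ≤ rmax * ∏ i, ρ i := by
  obtain ⟨i₀, hi₀⟩ := Finite.exists_max ρ
  have hmaps k := mapsTo_of_eq_iUnion_image (hK i₀) k
  have hpi_subset : univ.pi K ⊆ Icc A B := fun p hp =>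
    ⟨fun i => (hA i).2 (hp i trivial), fun i => (hB i).2 (hp i trivial)⟩
  set L : Fin (ℓ i₀) → ι → ℝ :=
    fun k => update (ρ * A + c) i₀ (ρ i₀ * (r i₀ k * A i₀ + a i₀ k) + c i₀)
  set U : Fin (ℓ i₀) → ι → ℝ :=
    fun k => update (ρ * B + c) i₀ (ρ i₀ * (r i₀ k * B i₀ + a i₀ k) + c i₀)
  have hL k : L k ∈ Icc A B :=
    hpi_subset (hb.update_mem_pi (fun i _ => (hA i).1) i₀ (hmaps k (hA i₀).1))
  have hU k : U k ∈ Icc A B :=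
    hpi_subset (hb.update_mem_pi (fun i _ => (hB i).1) i₀ (hmaps k (hB i₀).1))
  obtain ⟨kB, hkB⟩ := exists_map_eq_of_isGreatest (hK i₀) (fun k => (hr i₀ k).1.le) (hB i₀)
  obtain ⟨k, hkL, hkU⟩ : ∃ k, f (L k) ≤ y ∧ y ≤ f (U k) := by
    refine Fin.exists_le_le_of_chain (fun k hk => ?_) (fun k hk => ?_) kB ?_
    · exact apply_update_le_apply_update hf (fun i => (hA i).2 (hB i).1)
        (fun j => hb.balanced j i₀) (hb.pos i₀).le (hL _) (hU k) hD
        fun p hp => hcond p hp i₀ k hk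
    · have hfix := map_eq_of_isLeast_of_monotone (hK i₀) (fun k => (hr i₀ k).1.le) (hA i₀)
        (horder i₀) hk
      show f (update (ρ * A + c) i₀ (ρ i₀ * (r i₀ k * A i₀ + a i₀ k) + c i₀)) ≤ y
      rw [hfix]
      exact (congrArg f (update_eq_self i₀ (ρ * A + c))).trans_le hb.apply_lower_le
    · show y ≤ f (update (ρ * B + c) i₀ (ρ i₀ * (r i₀ kB * B i₀ + a i₀ kB) + c i₀))
      rw [hkB]
      exact hb.le_apply_upper.trans_eq (congrArg f (update_eq_self i₀ (ρ * B + c))).symm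
  refine ⟨_, _, hb.refine hsmin hi₀ ⟨(hr i₀ k).1, (hr i₀ k).2.le⟩ (hsmin_le i₀ k) (hmaps k)
    hkL hkU, ?_⟩
  rw [prod_update_mul_self]
  exact mul_le_mul_of_nonneg_right (hrmax i₀ k) (Finset.prod_nonneg fun j _ => (hb.pos j).le)

theorem isBracket_one_zero (hsmin : smin ≤ 1) (hy : y ∈ Icc (f A) (f B)) :
    IsBracket K A B smin f y 1 0 where
  pos _ := one_pos
  balanced _ _ := by simpa using hsmin
  mapsTo _ _ hx := by simpa using hx
  apply_lower_le := by simpa using hy.1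
  le_apply_upper := by simpa using hy.2

theorem IsBracket.mul_le_of_prod_le [Fintype ι] (hb : IsBracket K A B smin f y ρ c)
    (hsmin : 0 ≤ smin) {t : ℝ} (ht : 0 ≤ t) (hprod : ∏ i, ρ i ≤ t ^ Fintype.card ι) (i : ι) :
    smin * ρ i ≤ t := by
  have hρi := mul_nonneg hsmin (hb.pos i).le
  refine (pow_le_pow_iff_left₀ hρi ht (Fintype.card_pos_iff.2 ⟨i⟩).ne').1 (le_trans ?_ hprod)
  calc (smin * ρ i) ^ Fintype.card ι = ∏ _j : ι, smin * ρ i := by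
        rw [Finset.prod_const, Finset.card_univ]
    _ ≤ ∏ j, ρ j := Finset.prod_le_prod (fun _ _ => hρi) fun j _ => hb.balanced j i

theorem mem_image_pi_of_forall_isBracket [Fintype ι] (hKc : ∀ i, IsCompact (K i))
    (hA : ∀ i, A i ∈ K i) (hf : Continuous f) (hsmin : 0 < smin) {t : ℝ} (ht : t ∈ Ico 0 1)
    (h : ∀ n : ℕ, ∃ ρ c, IsBracket K A B smin f y ρ c ∧ ∀ i, smin * ρ i ≤ t ^ n) :
    y ∈ f '' univ.pi K := by
  choose ρ c hb hρ using h
  have hρ_lim (i : ι) : Tendsto (fun n => ρ n i) atTop (𝓝 0) :=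
    squeeze_zero (fun n => ((hb n).pos i).le) (fun n => (le_div_iff₀' hsmin).2 (hρ n i))
      (by simpa using (tendsto_pow_atTop_nhds_zero_of_lt_one ht.1 ht.2).div_const smin)
  refine (isCompact_univ_pi hKc).exists_apply_eq_of_tendsto_sub hf
    (fun n i _ => (hb n).mapsTo i (hA i)) (tendsto_pi_nhds.2 fun i => ?_)
    (fun n => (hb n).apply_lower_le) (fun n => (hb n).le_apply_upper)
  have hlim := (hρ_lim i).mul_const (B i - A i)
  rw [zero_mul] at hlim
  refine hlim.congr fun n => ?_
  simp only [Pi.sub_apply, Pi.add_apply, Pi.mul_apply]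
  ring

theorem Icc_subset_image_pi [Fintype ι] [DecidableEq ι] [Nonempty ι] {ℓ : ι → ℕ}
    {r a : (i : ι) → Fin (ℓ i) → ℝ}
    (hr : ∀ i k, r i k ∈ Ioo (0 : ℝ) 1) (hKc : ∀ i, IsCompact (K i))
    (hK : ∀ i, K i = ⋃ k, (fun x => r i k * x + a i k) '' K i)
    (hA : ∀ i, IsLeast (K i) (A i)) (hB : ∀ i, IsGreatest (K i) (B i))
    (horder : ∀ i, Monotone fun k => r i k * A i + a i k)
    (hsmin : smin ∈ Ioc 0 1) (hsmin_le : ∀ i k, smin ≤ r i k)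
    (hf : Differentiable ℝ f) (hD : ∀ p ∈ Icc A B, ∀ j, 0 ≤ fderiv ℝ f p (Pi.single j 1))
    (hcond : ∀ p ∈ Icc A B, ∀ i (k : Fin (ℓ i)) (hk : (k : ℕ) + 1 < ℓ i),
      0 ≤ smin * ∑ j ∈ Finset.univ.erase i, (B j - A j) * fderiv ℝ f p (Pi.single j 1)
        + ((r i k * B i + a i k) - (r i ⟨k + 1, hk⟩ * A i + a i ⟨k + 1, hk⟩))
          * fderiv ℝ f p (Pi.single i 1)) :
    Icc (f A) (f B) ⊆ f '' univ.pi K := by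
  intro y hy
  obtain ⟨rmax, hrmax_mem, hrmax⟩ :=
    Finite.exists_mem_Ico_forall_le (g := fun p : Σ i, Fin (ℓ i) => r p.1 p.2)
      fun p => (hr p.1 p.2).2
  have hiterate (n : ℕ) : ∃ ρ c, IsBracket K A B smin f y ρ c ∧ ∏ i, ρ i ≤ rmax ^ n := by
    induction n with
    | zero => exact ⟨1, 0, isBracket_one_zero hsmin.2 hy, by simp⟩
    | succ n ih =>
      obtain ⟨ρ, c, hb, hprod⟩ := ih
      obtain ⟨ρ', c', hb', hprod'⟩ := hb.exists_next hr (fun i k => hrmax ⟨i, k⟩) hK hA hB horder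
        hsmin.1.le hsmin_le hf hD hcond
      exact ⟨ρ', c', hb',
        hprod'.trans (pow_succ' rmax n ▸ mul_le_mul_of_nonneg_left hprod hrmax_mem.1)⟩
  refine mem_image_pi_of_forall_isBracket (B := B) hKc (fun i => (hA i).1) hf.continuous hsmin.1
    hrmax_mem fun n => ?_
  obtain ⟨ρ, c, hb, hprod⟩ := hiterate (n * Fintype.card ι)
  exact ⟨ρ, c, hb,
    hb.mul_le_of_prod_le hsmin.1.le (pow_nonneg hrmax_mem.1 n) (pow_mul rmax n _ ▸ hprod)⟩

end Bracket

theorem continuous_image_of_self_similar_sets_finite_union_of_intervals_general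
    (d : ℕ) (hd : 2 ≤ d)
    (ℓ : Fin d → ℕ)
    (r a : (i : Fin d) → Fin (ℓ i) → ℝ)
    (hr : ∀ i k, r i k ∈ Set.Ioo (0 : ℝ) 1)
    (K : Fin d → Set ℝ)
    (hKne : ∀ i, (K i).Nonempty)
    (hKc : ∀ i, IsCompact (K i))
    (hK : ∀ i, K i = ⋃ k : Fin (ℓ i), (fun x => r i k * x + a i k) '' K i)
    (A B : Fin d → ℝ)
    (hA : ∀ i, A i = sInf (K i)) (hB : ∀ i, B i = sSup (K i))
    (horder : ∀ i, ∀ k : Fin (ℓ i), ∀ hk : (k : ℕ) + 1 < ℓ i,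
      r i k * A i + a i k ≤ r i ⟨(k : ℕ) + 1, hk⟩ * A i + a i ⟨(k : ℕ) + 1, hk⟩)
    (smin : ℝ)
    (hsmin_le : ∀ i k, smin ≤ r i k)
    (hsmin_mem : ∃ i k, smin = r i k)
    (f : (Fin d → ℝ) → ℝ) (hf : ContDiff ℝ 1 f)
    (hcond : ∀ x : Fin d → ℝ, (∀ i, x i ∈ Set.Icc (A i) (B i)) → ∀ i : Fin d,
      0 < fderiv ℝ f x (Pi.single i 1) ∧
      ∀ k : Fin (ℓ i), ∀ hk : (k : ℕ) + 1 < ℓ i,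
        0 ≤ smin * (∑ j ∈ Finset.univ.erase i, (B j - A j) * fderiv ℝ f x (Pi.single j 1))
            + ((r i k * B i + a i k)
                - (r i ⟨(k : ℕ) + 1, hk⟩ * A i + a i ⟨(k : ℕ) + 1, hk⟩))
              * fderiv ℝ f x (Pi.single i 1)) :
    ∃ (n : ℕ) (c e : Fin n → ℝ), (∀ j, c j ≤ e j) ∧
      {y : ℝ | ∃ x : Fin d → ℝ, (∀ i, x i ∈ K i) ∧ f x = y}
        = ⋃ j : Fin n, Set.Icc (c j) (e j) := by
  have : Nonempty (Fin d) := ⟨⟨0, by omega⟩⟩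
  have hA' i : IsLeast (K i) (A i) := hA i ▸ (hKc i).isLeast_sInf (hKne i)
  have hB' i : IsGreatest (K i) (B i) := hB i ▸ (hKc i).isGreatest_sSup (hKne i)
  obtain ⟨i, k, hik⟩ := hsmin_mem
  have hbox {p : Fin d → ℝ} (hp : p ∈ Icc A B) i : p i ∈ Icc (A i) (B i) := ⟨hp.1 i, hp.2 i⟩
  have hfd : Differentiable ℝ f := hf.differentiable one_ne_zero
  have hD p (hp : p ∈ Icc A B) j := (hcond p (hbox hp) j).1.le
  have himage : f '' univ.pi K = Icc (f A) (f B) :=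
    (image_pi_subset_Icc hA' hB' hfd hD).antisymm <|
      Icc_subset_image_pi hr hKc hK hA' hB' (fun i => Fin.monotone_of_le_succ (horder i))
        (hik ▸ ⟨(hr i k).1, (hr i k).2.le⟩) hsmin_le hfd hD fun p hp j => (hcond p (hbox hp) j).2
  refine ⟨1, fun _ => f A, fun _ => f B,
    fun _ => (himage ▸ mem_image_of_mem f fun i _ => (hA' i).1 : f A ∈ Icc (f A) (f B)).2, ?_⟩
  rw [iUnion_const, ← himage]
  ext y
  simp only [mem_ofPred_eq, mem_image, mem_univ_pi]

/-- Theorem 1.3 (Theorem `arithmetic`): under partial-derivative conditions, the continuous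
image of self-similar sets with positive ratios is a finite union of closed intervals. -/
theorem continuous_image_of_self_similar_sets_finite_union_of_intervals
    (d : ℕ) (hd : 2 ≤ d)
    (ℓ : Fin d → ℕ) (hℓ : ∀ i, 2 ≤ ℓ i)
    (r a : (i : Fin d) → Fin (ℓ i) → ℝ)
    (hr : ∀ i k, r i k ∈ Set.Ioo (0 : ℝ) 1)
    (K : Fin d → Set ℝ)
    (hKne : ∀ i, (K i).Nonempty)
    (hKc : ∀ i, IsCompact (K i))
    (hK : ∀ i, K i = ⋃ k : Fin (ℓ i), (fun x => r i k * x + a i k) '' K i)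
    (A B : Fin d → ℝ)
    (hA : ∀ i, A i = sInf (K i)) (hB : ∀ i, B i = sSup (K i))
    (hAB : ∀ i, A i < B i)
    (horder : ∀ i, ∀ k : Fin (ℓ i), ∀ hk : (k : ℕ) + 1 < ℓ i,
      r i k * A i + a i k ≤ r i ⟨(k : ℕ) + 1, hk⟩ * A i + a i ⟨(k : ℕ) + 1, hk⟩)
    (smin : ℝ)
    (hsmin_le : ∀ i k, smin ≤ r i k)
    (hsmin_mem : ∃ i k, smin = r i k)
    (f : (Fin d → ℝ) → ℝ) (hf : ContDiff ℝ 1 f)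
    (hcond : ∀ x : Fin d → ℝ, (∀ i, x i ∈ Set.Icc (A i) (B i)) → ∀ i : Fin d,
      0 < fderiv ℝ f x (Pi.single i 1) ∧
      ∀ k : Fin (ℓ i), ∀ hk : (k : ℕ) + 1 < ℓ i,
        0 ≤ smin * (∑ j ∈ Finset.univ.erase i, (B j - A j) * fderiv ℝ f x (Pi.single j 1))
            + ((r i k * B i + a i k)
                - (r i ⟨(k : ℕ) + 1, hk⟩ * A i + a i ⟨(k : ℕ) + 1, hk⟩))
              * fderiv ℝ f x (Pi.single i 1)) :
    ∃ (n : ℕ) (c e : Fin n → ℝ), (∀ j, c j ≤ e j) ∧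
      {y : ℝ | ∃ x : Fin d → ℝ, (∀ i, x i ∈ K i) ∧ f x = y}
        = ⋃ j : Fin n, Set.Icc (c j) (e j) :=
  continuous_image_of_self_similar_sets_finite_union_of_intervals_general d hd ℓ r a hr K hKne hKc
    hK A B hA hB horder smin hsmin_le hsmin_mem f hf hcond
end

section
/- Let K₁ and K₂ be self-similar sets as in the context, and let f : ℝ × ℝ → ℝ be C¹. If for every (x,y) ∈ [A₁,B₁] × [A₂,B₂] one has ∂_x f(x,y) > 0 and ∂_y f(x,y) > 0, and for every 1 ≤ i ≤ p−1 and 1 ≤ j ≤ q−1, s_min·(B₂ − A₂)·∂_y f(x,y) + (φ_i(B₁) − φ_{i+1}(A₁))·∂_x f(x,y) ≥ 0 and s_min·(B₁ − A₁)·∂_x f(x,y) + (ψ_j(B₂) − ψ_{j+1}(A₂))·∂_y f(x,y) ≥ 0, then f(K₁, K₂) = {f(x,y) : x ∈ K₁, y ∈ K₂} is a closed interval, i.e., there exist reals a ≤ b with f(K₁,K₂) = [a,b]. -/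
/-!
A cell of `K₁ × K₂` is the image of `[A₁, B₁] × [A₂, B₂]` under `(x, y) ↦ (l₁ x + c₁, l₂ y + c₂)`,
where both affine maps send the attractors into themselves and `s_min l₂ ≤ l₁`, `s_min l₁ ≤ l₂`.
Suppose `f` is below `t` at the lower-left corner of a cell and above it at the upper-right one.
Split the longer side into the images of the IFS maps: the first piece starts at the lower-left
corner (`φ₁` fixes `A₁`), some piece ends at the upper-right one (some `φᵢ` fixes `B₁`), and by the
mean value theorem the gap condition, together with the balance of the sides, makes `f` at the
upper corner of each piece at least `f` at the lower corner of the next. Hence one of the pieces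
again brackets `t`. Iterating, `t` is bracketed by the values of `f` at two arbitrarily close
points of the compact set `K₁ × K₂`, so `t ∈ f(K₁ × K₂)`. Conversely `f` is monotone on the
rectangle, so `f(K₁ × K₂) ⊆ [f(A₁, A₂), f(B₁, B₂)]`.
-/

open Set

theorem exists_mem_Ico_forall_le_of_forall_lt {ι α : Type*} [Finite ι] [LinearOrder α]
    {f : ι → α} {a c : α} (hac : a < c) (h : ∀ i, f i < c) : ∃ θ ∈ Ico a c, ∀ i, f i ≤ θ := by
  cases isEmpty_or_nonempty ι with
  | inl _ => exact ⟨a, ⟨le_rfl, hac⟩, isEmptyElim⟩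
  | inr _ =>
    obtain ⟨i₀, hi₀⟩ := Finite.exists_max f
    exact ⟨max a (f i₀), ⟨le_max_left _ _, max_lt hac (h i₀)⟩,
      fun i => (hi₀ i).trans (le_max_right _ _)⟩

theorem apply_zero_le_of_chain {α : Type*} [Preorder α] {n : ℕ} {g : Fin n → α}
    (hchain : ∀ k : Fin n, ∀ hk : (k : ℕ) + 1 < n, g k ≤ g ⟨k + 1, hk⟩) (i : Fin n) :
    g ⟨0, i.pos⟩ ≤ g i := by
  obtain ⟨i, hin⟩ := i
  induction i with
  | zero => exact le_rfl
  | succ i ih => exact (ih (by omega)).trans (hchain ⟨i, by omega⟩ hin)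

theorem exists_le_and_le_of_chain {α : Type*} [LinearOrder α] {n : ℕ} {u v : Fin n → α} {t : α}
    (h₀ : ∀ h : 0 < n, u ⟨0, h⟩ ≤ t)
    (hchain : ∀ k : Fin n, ∀ hk : (k : ℕ) + 1 < n, u ⟨k + 1, hk⟩ ≤ v k)
    (i : Fin n) (hi : t ≤ v i) : ∃ k, u k ≤ t ∧ t ≤ v k := by
  obtain ⟨i, hin⟩ := i
  induction i with
  | zero => exact ⟨_, h₀ hin, hi⟩
  | succ i ih =>
    by_cases h : t ≤ v ⟨i, by omega⟩
    · exact ih _ h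
    · exact ⟨_, (hchain ⟨i, _⟩ hin).trans (not_le.1 h).le, hi⟩

theorem ContinuousLinearMap.apply_prod_eq (L : ℝ × ℝ →L[ℝ] ℝ) (u v : ℝ) :
    L (u, v) = u * L (1, 0) + v * L (0, 1) := by
  have : ((u, v) : ℝ × ℝ) = u • (1, 0) + v • (0, 1) := by ext <;> simp
  rw [this, map_add, map_smul, map_smul, smul_eq_mul, smul_eq_mul]

theorem fderiv_comp_swap_apply {𝕜 E F G : Type*} [NontriviallyNormedField 𝕜]
    [NormedAddCommGroup E] [NormedSpace 𝕜 E] [NormedAddCommGroup F] [NormedSpace 𝕜 F]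
    [NormedAddCommGroup G] [NormedSpace 𝕜 G] (f : E × F → G) (z v : F × E) :
    fderiv 𝕜 (f ∘ Prod.swap) z v = fderiv 𝕜 f z.swap v.swap :=
  DFunLike.congr_fun ((ContinuousLinearEquiv.prodComm 𝕜 F E).comp_right_fderiv (f := f)) v

theorem Convex.le_of_fderiv_nonneg {E : Type*} [NormedAddCommGroup E] [NormedSpace ℝ E]
    {f : E → ℝ} {s : Set E} (hs : Convex ℝ s) (hf : Differentiable ℝ f) {x y : E}
    (hx : x ∈ s) (hy : y ∈ s) (h : ∀ z ∈ s, 0 ≤ fderiv ℝ f z (y - x)) : f x ≤ f y := by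
  obtain ⟨z, hz, hxy⟩ := domain_mvt (fun z _ => (hf z).hasFDerivAt.hasFDerivWithinAt) hs hx hy
  linarith [h z (hs.segment_subset hx hy hz)]

theorem Convex.le_of_partials {f : ℝ × ℝ → ℝ} {s : Set (ℝ × ℝ)} (hs : Convex ℝ s)
    (hf : Differentiable ℝ f) {z w : ℝ × ℝ} (hz : z ∈ s) (hw : w ∈ s)
    (h : ∀ ξ ∈ s, 0 ≤ (w.1 - z.1) * fderiv ℝ f ξ (1, 0) + (w.2 - z.2) * fderiv ℝ f ξ (0, 1)) :
    f z ≤ f w :=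
  hs.le_of_fderiv_nonneg hf hz hw fun ξ hξ => (h ξ hξ).trans ((fderiv ℝ f ξ).apply_prod_eq _ _).ge

theorem Convex.monotoneOn_of_partials_nonneg {f : ℝ × ℝ → ℝ} {s : Set (ℝ × ℝ)} (hs : Convex ℝ s)
    (hf : Differentiable ℝ f) (h : ∀ ξ ∈ s, 0 ≤ fderiv ℝ f ξ (1, 0) ∧ 0 ≤ fderiv ℝ f ξ (0, 1)) :
    MonotoneOn f s := fun _ hz _ hw hzw =>
  hs.le_of_partials hf hz hw fun ξ hξ => add_nonneg
    (mul_nonneg (sub_nonneg.2 hzw.1) (h ξ hξ).1) (mul_nonneg (sub_nonneg.2 hzw.2) (h ξ hξ).2)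

theorem IsCompact.mem_image_of_forall_exists_dist_lt {X : Type*} [PseudoMetricSpace X] {K : Set X}
    (hK : IsCompact K) {f : X → ℝ} (hf : ContinuousOn f K) {t : ℝ}
    (h : ∀ δ > 0, ∃ x ∈ K, ∃ y ∈ K, dist x y < δ ∧ f x ≤ t ∧ t ≤ f y) : t ∈ f '' K := by
  rw [← (hK.image_of_continuousOn hf).isClosed.closure_eq, Metric.mem_closure_iff]
  intro ε hε
  obtain ⟨δ, hδ, hfδ⟩ :=
    Metric.uniformContinuousOn_iff.1 (hK.uniformContinuousOn_of_continuous hf) ε hε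
  obtain ⟨x, hx, y, hy, hxy, hxt, hty⟩ := h δ hδ
  refine ⟨f x, mem_image_of_mem f hx, ?_⟩
  have hfxy := hfδ x hx y hy hxy
  rw [Real.dist_eq] at hfxy ⊢
  rw [abs_of_nonneg (sub_nonneg.2 hxt)]
  linarith [neg_abs_le (f x - f y)]

structure IsOrderedAttractor (K : Set ℝ) {p : ℕ} (r a : Fin p → ℝ) (A B : ℝ) : Prop where
  eq_iUnion : K = ⋃ i, (fun x => r i * x + a i) '' K
  ratio_mem : ∀ i, r i ∈ Ioo (0 : ℝ) 1
  isLeast : IsLeast K A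
  isGreatest : IsGreatest K B
  apply_left_le_succ : ∀ i : Fin p, ∀ hi : (i : ℕ) + 1 < p,
    r i * A + a i ≤ r ⟨i + 1, hi⟩ * A + a ⟨i + 1, hi⟩

namespace IsOrderedAttractor

variable {K : Set ℝ} {p : ℕ} {r a : Fin p → ℝ} {A B : ℝ}

theorem mapsTo (hK : IsOrderedAttractor K r a A B) (i : Fin p) :
    MapsTo (fun x => r i * x + a i) K K := fun _ hx =>
  hK.eq_iUnion.superset (mem_iUnion_of_mem i (mem_image_of_mem _ hx))

theorem subset_Icc (hK : IsOrderedAttractor K r a A B) : K ⊆ Icc A B := fun _ hx =>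
  ⟨hK.isLeast.2 hx, hK.isGreatest.2 hx⟩

theorem le (hK : IsOrderedAttractor K r a A B) : A ≤ B := hK.isLeast.2 hK.isGreatest.1

theorem apply_zero_left_eq (hK : IsOrderedAttractor K r a A B) (h : 0 < p) :
    r ⟨0, h⟩ * A + a ⟨0, h⟩ = A := by
  obtain ⟨i, y, hy, hyA⟩ := mem_iUnion.1 (hK.eq_iUnion.subset hK.isLeast.1)
  refine le_antisymm ?_ (hK.isLeast.2 (hK.mapsTo _ hK.isLeast.1))
  calc r ⟨0, h⟩ * A + a ⟨0, h⟩ ≤ r i * A + a i :=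
        apply_zero_le_of_chain (g := fun i => r i * A + a i) hK.apply_left_le_succ i
    _ ≤ r i * y + a i := by gcongr; exacts [(hK.ratio_mem i).1.le, hK.isLeast.2 hy]
    _ = A := hyA

theorem exists_apply_right_eq (hK : IsOrderedAttractor K r a A B) : ∃ i, r i * B + a i = B := by
  obtain ⟨i, y, hy, hyB⟩ := mem_iUnion.1 (hK.eq_iUnion.subset hK.isGreatest.1)
  refine ⟨i, le_antisymm (hK.isGreatest.2 (hK.mapsTo i hK.isGreatest.1)) ?_⟩
  calc B = r i * y + a i := hyB.symm
    _ ≤ r i * B + a i := by gcongr; exacts [(hK.ratio_mem i).1.le, hK.isGreatest.2 hy]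

end IsOrderedAttractor

/-- For the second factor the condition reads `GapCondition (f ∘ Prod.swap) ρ b A₂ B₂ A₁ B₁ s`. -/
def GapCondition (f : ℝ × ℝ → ℝ) {p : ℕ} (r a : Fin p → ℝ) (A₁ B₁ A₂ B₂ s : ℝ) : Prop :=
  ∀ z : ℝ × ℝ, z.1 ∈ Icc A₁ B₁ → z.2 ∈ Icc A₂ B₂ → ∀ i : Fin p, ∀ hi : (i : ℕ) + 1 < p,
    0 ≤ s * (B₂ - A₂) * fderiv ℝ f z (0, 1)
      + ((r i * B₁ + a i) - (r ⟨i + 1, hi⟩ * A₁ + a ⟨i + 1, hi⟩)) * fderiv ℝ f z (1, 0)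

/-- `(l₁, c₁, l₂, c₂)` encodes the cell `(l₁ • [A₁, B₁] + c₁) × (l₂ • [A₂, B₂] + c₂)`. -/
structure IsBracketingCell (f : ℝ × ℝ → ℝ) (K₁ K₂ : Set ℝ) (A₁ B₁ A₂ B₂ s t l₁ c₁ l₂ c₂ : ℝ) :
    Prop where
  nonneg₁ : 0 ≤ l₁
  nonneg₂ : 0 ≤ l₂
  mapsTo₁ : MapsTo (fun x => l₁ * x + c₁) K₁ K₁
  mapsTo₂ : MapsTo (fun y => l₂ * y + c₂) K₂ K₂
  balanced₁ : s * l₂ ≤ l₁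
  balanced₂ : s * l₁ ≤ l₂
  lower : f (l₁ * A₁ + c₁, l₂ * A₂ + c₂) ≤ t
  upper : t ≤ f (l₁ * B₁ + c₁, l₂ * B₂ + c₂)

section

variable {f : ℝ × ℝ → ℝ} {K₁ K₂ : Set ℝ} {A₁ B₁ A₂ B₂ s θ t l₁ c₁ l₂ c₂ : ℝ}
  {p q : ℕ} {r a : Fin p → ℝ} {ρ b : Fin q → ℝ}

namespace IsBracketingCell

theorem comp_swap_iff :
    IsBracketingCell (f ∘ Prod.swap) K₂ K₁ A₂ B₂ A₁ B₁ s t l₂ c₂ l₁ c₁ ↔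
      IsBracketingCell f K₁ K₂ A₁ B₁ A₂ B₂ s t l₁ c₁ l₂ c₂ :=
  ⟨fun h => ⟨h.nonneg₂, h.nonneg₁, h.mapsTo₂, h.mapsTo₁, h.balanced₂, h.balanced₁, h.lower,
      h.upper⟩,
    fun h => ⟨h.nonneg₂, h.nonneg₁, h.mapsTo₂, h.mapsTo₁, h.balanced₂, h.balanced₁, h.lower,
      h.upper⟩⟩

theorem lower_succ_le_upper (hC : IsBracketingCell f K₁ K₂ A₁ B₁ A₂ B₂ s t l₁ c₁ l₂ c₂)
    (hK₁ : IsOrderedAttractor K₁ r a A₁ B₁) (hA₂ : IsLeast K₂ A₂) (hB₂ : IsGreatest K₂ B₂)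
    (hf : Differentiable ℝ f)
    (hfy : ∀ z : ℝ × ℝ, z.1 ∈ Icc A₁ B₁ → z.2 ∈ Icc A₂ B₂ → 0 ≤ fderiv ℝ f z (0, 1))
    (hgap : GapCondition f r a A₁ B₁ A₂ B₂ s) (k : Fin p) (hk : (k : ℕ) + 1 < p) :
    f (l₁ * (r ⟨k + 1, hk⟩ * A₁ + a ⟨k + 1, hk⟩) + c₁, l₂ * A₂ + c₂) ≤
      f (l₁ * (r k * B₁ + a k) + c₁, l₂ * B₂ + c₂) := by
  have hmem : ∀ x ∈ K₁, ∀ y ∈ K₂, (l₁ * x + c₁, l₂ * y + c₂) ∈ Icc A₁ B₁ ×ˢ Icc A₂ B₂ :=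
    fun x hx y hy => ⟨hK₁.subset_Icc (hC.mapsTo₁ hx),
      ⟨hA₂.2 (hC.mapsTo₂ hy), hB₂.2 (hC.mapsTo₂ hy)⟩⟩
  refine ((convex_Icc _ _).prod (convex_Icc _ _)).le_of_partials hf
    (hmem _ (hK₁.mapsTo _ hK₁.isLeast.1) _ hA₂.1) (hmem _ (hK₁.mapsTo _ hK₁.isGreatest.1) _ hB₂.1)
    fun ξ hξ => ?_
  have hAB₂ : 0 ≤ B₂ - A₂ := sub_nonneg.2 (hA₂.2 hB₂.1)
  nlinarith [mul_nonneg hC.nonneg₁ (hgap ξ hξ.1 hξ.2 k hk),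
    mul_nonneg (sub_nonneg.2 hC.balanced₂) (mul_nonneg hAB₂ (hfy ξ hξ.1 hξ.2))]

theorem exists_subcell_fst (hC : IsBracketingCell f K₁ K₂ A₁ B₁ A₂ B₂ s t l₁ c₁ l₂ c₂)
    (hK₁ : IsOrderedAttractor K₁ r a A₁ B₁) (hA₂ : IsLeast K₂ A₂) (hB₂ : IsGreatest K₂ B₂)
    (hs : 0 ≤ s) (hsr : ∀ i, s ≤ r i) (hf : Differentiable ℝ f)
    (hfy : ∀ z : ℝ × ℝ, z.1 ∈ Icc A₁ B₁ → z.2 ∈ Icc A₂ B₂ → 0 ≤ fderiv ℝ f z (0, 1))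
    (hgap : GapCondition f r a A₁ B₁ A₂ B₂ s) (hl : l₂ ≤ l₁) :
    ∃ i, IsBracketingCell f K₁ K₂ A₁ B₁ A₂ B₂ s t (l₁ * r i) (l₁ * a i + c₁) l₂ c₂ := by
  have hcomp : ∀ i x, l₁ * r i * x + (l₁ * a i + c₁) = l₁ * (r i * x + a i) + c₁ :=
    fun _ _ => by ring
  obtain ⟨k, hk₀, hk₁⟩ : ∃ k, f (l₁ * (r k * A₁ + a k) + c₁, l₂ * A₂ + c₂) ≤ t ∧
      t ≤ f (l₁ * (r k * B₁ + a k) + c₁, l₂ * B₂ + c₂) := by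
    obtain ⟨i, hi⟩ := hK₁.exists_apply_right_eq
    refine exists_le_and_le_of_chain (fun h => ?_)
      (hC.lower_succ_le_upper hK₁ hA₂ hB₂ hf hfy hgap) i ?_
    · rw [hK₁.apply_zero_left_eq h]; exact hC.lower
    · rw [hi]; exact hC.upper
  have hr := hK₁.ratio_mem k
  refine ⟨k, mul_nonneg hC.nonneg₁ hr.1.le, hC.nonneg₂, fun x hx => ?_, hC.mapsTo₂, ?_, ?_,
    by rwa [hcomp], by rwa [hcomp]⟩
  · dsimp only; rw [hcomp]; exact hC.mapsTo₁ (hK₁.mapsTo k hx)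
  · nlinarith [hsr k, hC.nonneg₁]
  · nlinarith [hC.balanced₂, mul_le_mul_of_nonneg_left hr.2.le (mul_nonneg hs hC.nonneg₁)]

theorem exists_subcell_mul_le (hC : IsBracketingCell f K₁ K₂ A₁ B₁ A₂ B₂ s t l₁ c₁ l₂ c₂)
    (hK₁ : IsOrderedAttractor K₁ r a A₁ B₁) (hK₂ : IsOrderedAttractor K₂ ρ b A₂ B₂)
    (hs : 0 ≤ s) (hr : ∀ i, r i ∈ Icc s θ) (hρ : ∀ j, ρ j ∈ Icc s θ) (hf : Differentiable ℝ f)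
    (hpartials : ∀ z : ℝ × ℝ, z.1 ∈ Icc A₁ B₁ → z.2 ∈ Icc A₂ B₂ →
      0 ≤ fderiv ℝ f z (1, 0) ∧ 0 ≤ fderiv ℝ f z (0, 1))
    (hgap₁ : GapCondition f r a A₁ B₁ A₂ B₂ s)
    (hgap₂ : GapCondition (f ∘ Prod.swap) ρ b A₂ B₂ A₁ B₁ s) :
    ∃ l₁' c₁' l₂' c₂', IsBracketingCell f K₁ K₂ A₁ B₁ A₂ B₂ s t l₁' c₁' l₂' c₂' ∧
      l₁' * l₂' ≤ θ * (l₁ * l₂) := by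
  have hl := mul_nonneg hC.nonneg₁ hC.nonneg₂
  rcases le_total l₂ l₁ with hle | hle
  · obtain ⟨i, hC'⟩ := hC.exists_subcell_fst hK₁ hK₂.isLeast hK₂.isGreatest hs (fun i => (hr i).1)
      hf (fun z h₁ h₂ => (hpartials z h₁ h₂).2) hgap₁ hle
    refine ⟨_, _, _, _, hC', ?_⟩
    nlinarith [(hr i).2]
  · obtain ⟨j, hC'⟩ := (comp_swap_iff.2 hC).exists_subcell_fst hK₂ hK₁.isLeast hK₁.isGreatest hs
      (fun j => (hρ j).1) (hf.comp (ContinuousLinearEquiv.prodComm ℝ ℝ ℝ).differentiable)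
      (fun z h₁ h₂ => by rw [fderiv_comp_swap_apply]; exact (hpartials z.swap h₂ h₁).1) hgap₂ hle
    refine ⟨_, _, _, _, comp_swap_iff.1 hC', ?_⟩
    nlinarith [(hρ j).2]

theorem dist_corners_le (hC : IsBracketingCell f K₁ K₂ A₁ B₁ A₂ B₂ s t l₁ c₁ l₂ c₂) (hs : 0 < s)
    {ε : ℝ} (hε : 0 ≤ ε) (hsize : l₁ * l₂ ≤ s * ε ^ 2) :
    dist (l₁ * A₁ + c₁, l₂ * A₂ + c₂) (l₁ * B₁ + c₁, l₂ * B₂ + c₂) ≤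
      ε * dist (A₁, A₂) (B₁, B₂) := by
  have hside : ∀ l c x y : ℝ, 0 ≤ l → s * l ^ 2 ≤ l₁ * l₂ →
      dist (l * x + c) (l * y + c) ≤ ε * dist x y := fun l c x y hl hl₂ => by
    have hlε : l ≤ ε :=
      (pow_le_pow_iff_left₀ hl hε two_ne_zero).1 (le_of_mul_le_mul_left (hl₂.trans hsize) hs)
    rw [Real.dist_eq, Real.dist_eq, show l * x + c - (l * y + c) = l * (x - y) by ring, abs_mul,
      abs_of_nonneg hl]
    exact mul_le_mul_of_nonneg_right hlε (abs_nonneg _)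
  rw [Prod.dist_eq, Prod.dist_eq, mul_max_of_nonneg _ _ hε]
  exact max_le_max (hside _ _ _ _ hC.nonneg₁ (by nlinarith [hC.balanced₂, hC.nonneg₁]))
    (hside _ _ _ _ hC.nonneg₂ (by nlinarith [hC.balanced₁, hC.nonneg₂]))

end IsBracketingCell

theorem exists_isBracketingCell_mul_le_pow
    (hK₁ : IsOrderedAttractor K₁ r a A₁ B₁) (hK₂ : IsOrderedAttractor K₂ ρ b A₂ B₂)
    (hs : s ∈ Icc 0 1) (hθ : 0 ≤ θ) (hr : ∀ i, r i ∈ Icc s θ) (hρ : ∀ j, ρ j ∈ Icc s θ)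
    (hf : Differentiable ℝ f)
    (hpartials : ∀ z : ℝ × ℝ, z.1 ∈ Icc A₁ B₁ → z.2 ∈ Icc A₂ B₂ →
      0 ≤ fderiv ℝ f z (1, 0) ∧ 0 ≤ fderiv ℝ f z (0, 1))
    (hgap₁ : GapCondition f r a A₁ B₁ A₂ B₂ s)
    (hgap₂ : GapCondition (f ∘ Prod.swap) ρ b A₂ B₂ A₁ B₁ s)
    (ht : t ∈ Icc (f (A₁, A₂)) (f (B₁, B₂))) (n : ℕ) :
    ∃ l₁ c₁ l₂ c₂, IsBracketingCell f K₁ K₂ A₁ B₁ A₂ B₂ s t l₁ c₁ l₂ c₂ ∧ l₁ * l₂ ≤ θ ^ n := by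
  induction n with
  | zero =>
    refine ⟨1, 0, 1, 0, ⟨zero_le_one, zero_le_one, ?_, ?_, ?_, ?_, ?_, ?_⟩, by simp⟩ <;>
      simp [MapsTo, hs.2, ht.1, ht.2]
  | succ n ih =>
    obtain ⟨l₁, c₁, l₂, c₂, hC, hle⟩ := ih
    obtain ⟨l₁', c₁', l₂', c₂', hC', hle'⟩ :=
      hC.exists_subcell_mul_le hK₁ hK₂ hs.1 hr hρ hf hpartials hgap₁ hgap₂
    exact ⟨_, _, _, _, hC', hle'.trans (pow_succ' θ n ▸ mul_le_mul_of_nonneg_left hle hθ)⟩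

theorem exists_close_bracketing_pair
    (hK₁ : IsOrderedAttractor K₁ r a A₁ B₁) (hK₂ : IsOrderedAttractor K₂ ρ b A₂ B₂)
    (hs : s ∈ Ioc 0 1) (hθ : θ ∈ Ico 0 1) (hr : ∀ i, r i ∈ Icc s θ) (hρ : ∀ j, ρ j ∈ Icc s θ)
    (hf : Differentiable ℝ f)
    (hpartials : ∀ z : ℝ × ℝ, z.1 ∈ Icc A₁ B₁ → z.2 ∈ Icc A₂ B₂ →
      0 ≤ fderiv ℝ f z (1, 0) ∧ 0 ≤ fderiv ℝ f z (0, 1))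
    (hgap₁ : GapCondition f r a A₁ B₁ A₂ B₂ s)
    (hgap₂ : GapCondition (f ∘ Prod.swap) ρ b A₂ B₂ A₁ B₁ s)
    (ht : t ∈ Icc (f (A₁, A₂)) (f (B₁, B₂))) {δ : ℝ} (hδ : 0 < δ) :
    ∃ z ∈ K₁ ×ˢ K₂, ∃ w ∈ K₁ ×ˢ K₂, dist z w < δ ∧ f z ≤ t ∧ t ≤ f w := by
  obtain ⟨ε, hε, hεδ⟩ := exists_pos_mul_lt hδ (dist (A₁, A₂) (B₁, B₂))
  obtain ⟨n, hn⟩ := exists_pow_lt_of_lt_one (mul_pos hs.1 (pow_pos hε 2)) hθ.2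
  obtain ⟨l₁, c₁, l₂, c₂, hC, hle⟩ := exists_isBracketingCell_mul_le_pow hK₁ hK₂
    (Ioc_subset_Icc_self hs) hθ.1 hr hρ hf hpartials hgap₁ hgap₂ ht n
  refine ⟨_, ⟨hC.mapsTo₁ hK₁.isLeast.1, hC.mapsTo₂ hK₂.isLeast.1⟩,
    _, ⟨hC.mapsTo₁ hK₁.isGreatest.1, hC.mapsTo₂ hK₂.isGreatest.1⟩, ?_, hC.lower, hC.upper⟩
  calc _ ≤ ε * dist (A₁, A₂) (B₁, B₂) := hC.dist_corners_le hs.1 hε.le (hle.trans hn.le)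
    _ < δ := by rwa [mul_comm]

end

theorem image_of_two_self_similar_sets_is_interval_general
    (p q : ℕ)
    (r a : Fin p → ℝ) (ρ b : Fin q → ℝ)
    (hr : ∀ i, r i ∈ Set.Ioo (0 : ℝ) 1) (hρ : ∀ j, ρ j ∈ Set.Ioo (0 : ℝ) 1)
    (K₁ K₂ : Set ℝ)
    (hK₁ne : K₁.Nonempty) (hK₁c : IsCompact K₁)
    (hK₁ : K₁ = ⋃ i : Fin p, (fun x => r i * x + a i) '' K₁)
    (hK₂ne : K₂.Nonempty) (hK₂c : IsCompact K₂)
    (hK₂ : K₂ = ⋃ j : Fin q, (fun x => ρ j * x + b j) '' K₂)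
    (A₁ B₁ A₂ B₂ : ℝ)
    (hA₁ : A₁ = sInf K₁) (hB₁ : B₁ = sSup K₁)
    (hA₂ : A₂ = sInf K₂) (hB₂ : B₂ = sSup K₂)
    (hord₁ : ∀ i : Fin p, ∀ hi : (i : ℕ) + 1 < p,
      r i * A₁ + a i ≤ r ⟨(i : ℕ) + 1, hi⟩ * A₁ + a ⟨(i : ℕ) + 1, hi⟩)
    (hord₂ : ∀ j : Fin q, ∀ hj : (j : ℕ) + 1 < q,
      ρ j * A₂ + b j ≤ ρ ⟨(j : ℕ) + 1, hj⟩ * A₂ + b ⟨(j : ℕ) + 1, hj⟩)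
    (smin : ℝ)
    (hsmin_le₁ : ∀ i, smin ≤ r i) (hsmin_le₂ : ∀ j, smin ≤ ρ j)
    (hsmin_mem : (∃ i, smin = r i) ∨ (∃ j, smin = ρ j))
    (f : ℝ × ℝ → ℝ) (hf : ContDiff ℝ 1 f)
    (hpos : ∀ z : ℝ × ℝ, z.1 ∈ Set.Icc A₁ B₁ → z.2 ∈ Set.Icc A₂ B₂ →
      0 < fderiv ℝ f z (1, 0) ∧ 0 < fderiv ℝ f z (0, 1))
    (hcond₁ : ∀ z : ℝ × ℝ, z.1 ∈ Set.Icc A₁ B₁ → z.2 ∈ Set.Icc A₂ B₂ →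
      ∀ i : Fin p, ∀ hi : (i : ℕ) + 1 < p,
        0 ≤ smin * (B₂ - A₂) * fderiv ℝ f z (0, 1)
            + ((r i * B₁ + a i) - (r ⟨(i : ℕ) + 1, hi⟩ * A₁ + a ⟨(i : ℕ) + 1, hi⟩))
              * fderiv ℝ f z (1, 0))
    (hcond₂ : ∀ z : ℝ × ℝ, z.1 ∈ Set.Icc A₁ B₁ → z.2 ∈ Set.Icc A₂ B₂ →
      ∀ j : Fin q, ∀ hj : (j : ℕ) + 1 < q,
        0 ≤ smin * (B₁ - A₁) * fderiv ℝ f z (1, 0)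
            + ((ρ j * B₂ + b j) - (ρ ⟨(j : ℕ) + 1, hj⟩ * A₂ + b ⟨(j : ℕ) + 1, hj⟩))
              * fderiv ℝ f z (0, 1)) :
    ∃ c e : ℝ, c ≤ e ∧
      {w : ℝ | ∃ x ∈ K₁, ∃ y ∈ K₂, f (x, y) = w} = Set.Icc c e := by
  have hD₁ : IsOrderedAttractor K₁ r a A₁ B₁ :=
    ⟨hK₁, hr, hA₁ ▸ hK₁c.isLeast_sInf hK₁ne, hB₁ ▸ hK₁c.isGreatest_sSup hK₁ne, hord₁⟩
  have hD₂ : IsOrderedAttractor K₂ ρ b A₂ B₂ :=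
    ⟨hK₂, hρ, hA₂ ▸ hK₂c.isLeast_sInf hK₂ne, hB₂ ▸ hK₂c.isGreatest_sSup hK₂ne, hord₂⟩
  have hs : smin ∈ Ioc 0 1 := by
    rcases hsmin_mem with ⟨i, rfl⟩ | ⟨j, rfl⟩
    exacts [Ioo_subset_Ioc_self (hr i), Ioo_subset_Ioc_self (hρ j)]
  obtain ⟨θ, hθ, hratio_le⟩ := exists_mem_Ico_forall_le_of_forall_lt (f := Sum.elim r ρ) one_pos
    (Sum.forall.2 ⟨fun i => (hr i).2, fun j => (hρ j).2⟩)
  have hpartials : ∀ z : ℝ × ℝ, z.1 ∈ Icc A₁ B₁ → z.2 ∈ Icc A₂ B₂ →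
      0 ≤ fderiv ℝ f z (1, 0) ∧ 0 ≤ fderiv ℝ f z (0, 1) :=
    fun z h₁ h₂ => (hpos z h₁ h₂).imp le_of_lt le_of_lt
  have hgap₂ : GapCondition (f ∘ Prod.swap) ρ b A₂ B₂ A₁ B₁ smin := fun z h₁ h₂ j hj => by
    rw [fderiv_comp_swap_apply, fderiv_comp_swap_apply]; exact hcond₂ z.swap h₂ h₁ j hj
  have hmonoOn : MonotoneOn f (Icc (A₁, A₂) (B₁, B₂)) :=
    (convex_Icc _ _).monotoneOn_of_partials_nonneg (hf.differentiable one_ne_zero)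
      fun z hz => hpartials z ⟨hz.1.1, hz.2.1⟩ ⟨hz.1.2, hz.2.2⟩
  have hAB : (A₁, A₂) ≤ (B₁, B₂) := ⟨hD₁.le, hD₂.le⟩
  have himage : {w | ∃ x ∈ K₁, ∃ y ∈ K₂, f (x, y) = w} = f '' (K₁ ×ˢ K₂) := by
    ext; simp [and_assoc]
  refine ⟨_, _, hmonoOn (left_mem_Icc.2 hAB) (right_mem_Icc.2 hAB) hAB, himage ▸ ?_⟩
  refine Subset.antisymm ((image_mono ?_).trans hmonoOn.image_Icc_subset) fun t ht => ?_
  · exact Icc_prod_Icc A₁ B₁ A₂ B₂ ▸ prod_mono hD₁.subset_Icc hD₂.subset_Icc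
  · exact (hK₁c.prod hK₂c).mem_image_of_forall_exists_dist_lt hf.continuous.continuousOn
      fun δ hδ => exists_close_bracketing_pair hD₁ hD₂ hs hθ
        (fun i => ⟨hsmin_le₁ i, hratio_le (.inl i)⟩) (fun j => ⟨hsmin_le₂ j, hratio_le (.inr j)⟩)
        (hf.differentiable one_ne_zero) hpartials hcond₁ hgap₂ ht hδ

/-- Corollary: `f(K₁,K₂)` is a closed interval under the pointwise partial-derivative
conditions on the whole rectangle. -/
theorem image_of_two_self_similar_sets_is_interval
    (p q : ℕ) (hp : 2 ≤ p) (hq : 2 ≤ q)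
    (r a : Fin p → ℝ) (ρ b : Fin q → ℝ)
    (hr : ∀ i, r i ∈ Set.Ioo (0 : ℝ) 1) (hρ : ∀ j, ρ j ∈ Set.Ioo (0 : ℝ) 1)
    (K₁ K₂ : Set ℝ)
    (hK₁ne : K₁.Nonempty) (hK₁c : IsCompact K₁)
    (hK₁ : K₁ = ⋃ i : Fin p, (fun x => r i * x + a i) '' K₁)
    (hK₂ne : K₂.Nonempty) (hK₂c : IsCompact K₂)
    (hK₂ : K₂ = ⋃ j : Fin q, (fun x => ρ j * x + b j) '' K₂)
    (A₁ B₁ A₂ B₂ : ℝ)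
    (hA₁ : A₁ = sInf K₁) (hB₁ : B₁ = sSup K₁)
    (hA₂ : A₂ = sInf K₂) (hB₂ : B₂ = sSup K₂)
    (hAB₁ : A₁ < B₁) (hAB₂ : A₂ < B₂)
    (hord₁ : ∀ i : Fin p, ∀ hi : (i : ℕ) + 1 < p,
      r i * A₁ + a i ≤ r ⟨(i : ℕ) + 1, hi⟩ * A₁ + a ⟨(i : ℕ) + 1, hi⟩)
    (hord₂ : ∀ j : Fin q, ∀ hj : (j : ℕ) + 1 < q,
      ρ j * A₂ + b j ≤ ρ ⟨(j : ℕ) + 1, hj⟩ * A₂ + b ⟨(j : ℕ) + 1, hj⟩)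
    (smin : ℝ)
    (hsmin_le₁ : ∀ i, smin ≤ r i) (hsmin_le₂ : ∀ j, smin ≤ ρ j)
    (hsmin_mem : (∃ i, smin = r i) ∨ (∃ j, smin = ρ j))
    (f : ℝ × ℝ → ℝ) (hf : ContDiff ℝ 1 f)
    (hpos : ∀ z : ℝ × ℝ, z.1 ∈ Set.Icc A₁ B₁ → z.2 ∈ Set.Icc A₂ B₂ →
      0 < fderiv ℝ f z (1, 0) ∧ 0 < fderiv ℝ f z (0, 1))
    (hcond₁ : ∀ z : ℝ × ℝ, z.1 ∈ Set.Icc A₁ B₁ → z.2 ∈ Set.Icc A₂ B₂ →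
      ∀ i : Fin p, ∀ hi : (i : ℕ) + 1 < p,
        0 ≤ smin * (B₂ - A₂) * fderiv ℝ f z (0, 1)
            + ((r i * B₁ + a i) - (r ⟨(i : ℕ) + 1, hi⟩ * A₁ + a ⟨(i : ℕ) + 1, hi⟩))
              * fderiv ℝ f z (1, 0))
    (hcond₂ : ∀ z : ℝ × ℝ, z.1 ∈ Set.Icc A₁ B₁ → z.2 ∈ Set.Icc A₂ B₂ →
      ∀ j : Fin q, ∀ hj : (j : ℕ) + 1 < q,
        0 ≤ smin * (B₁ - A₁) * fderiv ℝ f z (1, 0)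
            + ((ρ j * B₂ + b j) - (ρ ⟨(j : ℕ) + 1, hj⟩ * A₂ + b ⟨(j : ℕ) + 1, hj⟩))
              * fderiv ℝ f z (0, 1)) :
    ∃ c e : ℝ, c ≤ e ∧
      {w : ℝ | ∃ x ∈ K₁, ∃ y ∈ K₂, f (x, y) = w} = Set.Icc c e :=
  image_of_two_self_similar_sets_is_interval_general p q r a ρ b hr hρ K₁ K₂ hK₁ne hK₁c hK₁ hK₂ne
    hK₂c hK₂ A₁ B₁ A₂ B₂ hA₁ hB₁ hA₂ hB₂ hord₁ hord₂ smin hsmin_le₁ hsmin_le₂ hsmin_mem f hf hpos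
    hcond₁ hcond₂
end

section
/- Let C be the middle-third Cantor set. Then {1/x₁ + 1/x₂ + 1/x₃ + 1/x₄ : x₁, x₂, x₃, x₄ ∈ C, each x_i ≠ 0} = [4, ∞). -/
/-!
Every nonzero point of `C` can be written as `(2 + c) / 3 ^ (k + 1)` with `c ∈ C`, so `1 / C`
contains the images of `C` under the decreasing maps `c ↦ 3 ^ k * 3 / (2 + c)`. After scaling `y`
into `[4, 12]` by a power of `3`, it suffices that for suitable weights `w ∈ {1, 3} ^ 4` the sums
`∑ i, 3 * w i / (2 + c i)` with `c i ∈ C` fill `[∑ w, 3 / 2 * ∑ w]`. This is a nested-interval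
argument: split the coordinates one after another into their outer thirds, keeping the target
between the sums over the right and over the left endpoints. That is possible because the image of
each removed middle third is no longer than the images of the current intervals of the other
coordinates, provided the heavy coordinates are split first. Rescaling by `3` makes every level
look like the first one, and compactness of `C ^ 4` turns the approximations into an exact solution.
-/

open Set Finset

def DecreasingAtRate (m M : ℝ) (f : ℝ → ℝ) : Prop :=
  0 ≤ m ∧ ∀ x ∈ Icc (0 : ℝ) 1, ∀ y ∈ Icc (0 : ℝ) 1, x ≤ y →
    m * (y - x) ≤ f x - f y ∧ f x - f y ≤ M * (y - x)

/-- Coordinate `i` is split into thirds after the coordinates `j < i`, whose intervals then have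
length `1 / 3`: the image of its middle third must be covered by the images of the current
intervals of the others. -/
def SequentialGapCondition {ι : Type*} [Fintype ι] [LinearOrder ι] (m M : ι → ℝ) : Prop :=
  ∀ i, M i / 3 ≤ ∑ j ∈ univ.erase i, m j * if j < i then 1 / 3 else 1

namespace DecreasingAtRate

variable {m M : ℝ} {f : ℝ → ℝ}

theorem continuousOn (h : DecreasingAtRate m M f) : ContinuousOn f (Icc 0 1) := by
  refine (LipschitzOnWith.of_dist_le_mul (K := M.toNNReal) fun x hx y hy => ?_).continuousOn
  wlog hxy : x ≤ y generalizing x y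
  · rw [dist_comm, dist_comm x]
    exact this y hy x hx (le_of_not_ge hxy)
  obtain ⟨hlo, hhi⟩ := h.2 x hx y hy hxy
  have hm : 0 ≤ m * (y - x) := mul_nonneg h.1 (sub_nonneg.2 hxy)
  rw [Real.dist_eq, Real.dist_eq, abs_of_nonneg (by linarith), abs_of_nonpos (by linarith),
    neg_sub]
  exact hhi.trans (mul_le_mul_of_nonneg_right (Real.le_coe_toNNReal M) (sub_nonneg.2 hxy))

theorem rescale (h : DecreasingAtRate m M f) {b : ℝ} (hb : b ∈ Icc (0 : ℝ) (2 / 3)) :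
    DecreasingAtRate m M (fun x => 3 * f (b + x / 3)) := by
  refine ⟨h.1, fun x hx y hy hxy => ?_⟩
  obtain ⟨hlo, hhi⟩ := h.2 (b + x / 3) ⟨by linarith [hb.1, hx.1], by linarith [hb.2, hx.2]⟩
    (b + y / 3) ⟨by linarith [hb.1, hy.1], by linarith [hb.2, hy.2]⟩ (by linarith)
  constructor <;> linarith

end DecreasingAtRate

theorem exists_outer_third_of_gap_le {f : ℝ → ℝ} {R S t : ℝ} (hgap : f (1 / 3) - f (2 / 3) ≤ S - R)
    (h1 : R + f 1 ≤ t) (h0 : t ≤ S + f 0) :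
    ∃ β : ℝ, (β = 0 ∨ β = 2 / 3) ∧ R + f (β + 1 / 3) ≤ t ∧ t ≤ S + f β := by
  by_cases ht : t ≤ S + f (2 / 3)
  · exact ⟨2 / 3, Or.inr rfl, by norm_num [h1], ht⟩
  · exact ⟨0, Or.inl rfl, by rw [zero_add]; linarith, h0⟩

section CantorSum

variable {ι : Type*} [Fintype ι] [LinearOrder ι] {f : ι → ℝ → ℝ} {m M : ι → ℝ} {t : ℝ}

noncomputable def splitLength (s : Finset ι) (j : ι) : ℝ := if j ∈ s then 1 / 3 else 1

/-- `b i` is the left endpoint of the current interval of coordinate `i`. -/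
def Brackets (f : ι → ℝ → ℝ) (t : ℝ) (s : Finset ι) (b : ι → ℝ) : Prop :=
  (∀ i, b i = 0 ∨ b i = 2 / 3) ∧ (∀ i ∉ s, b i = 0) ∧
    ∑ i, f i (b i + splitLength s i) ≤ t ∧ t ≤ ∑ i, f i (b i)

theorem Brackets.le_sum_width {s : Finset ι} {b : ι → ℝ} (h : Brackets f t s b)
    (hf : ∀ i, DecreasingAtRate (m i) (M i) (f i)) {a : ι} (has : ∀ x ∈ s, x < a) :
    ∑ j ∈ univ.erase a, m j * (if j < a then 1 / 3 else 1) ≤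
      ∑ j ∈ univ.erase a, (f j (b j) - f j (b j + splitLength s j)) := by
  refine sum_le_sum fun j _ => ?_
  have hlen : (if j < a then 1 / 3 else 1 : ℝ) ≤ splitLength s j := by
    by_cases hj : j ∈ s
    · simp [splitLength, hj, has j hj]
    · simp only [splitLength, hj, if_false]; split_ifs <;> norm_num
  have hmem : b j ∈ Icc (0 : ℝ) 1 ∧ b j + splitLength s j ∈ Icc (0 : ℝ) 1 := by
    by_cases hj : j ∈ s
    · rcases h.1 j with hb | hb <;> simp only [splitLength, hj, if_true, hb] <;> norm_num
    · simp only [splitLength, hj, if_false, h.2.1 j hj]; norm_num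
  have hrate := ((hf j).2 _ hmem.1 _ hmem.2
    (le_add_of_nonneg_right (by unfold splitLength; split_ifs <;> norm_num))).1
  rw [add_sub_cancel_left] at hrate
  exact (mul_le_mul_of_nonneg_left hlen (hf j).1).trans hrate

theorem Brackets.exists_insert {s : Finset ι} {b : ι → ℝ} (h : Brackets f t s b)
    (hf : ∀ i, DecreasingAtRate (m i) (M i) (f i)) (hmM : SequentialGapCondition m M) {a : ι}
    (has : ∀ x ∈ s, x < a) : ∃ b', Brackets f t (insert a s) b' := by
  obtain ⟨hb, hbs, hlo, hhi⟩ := h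
  have ha : a ∉ s := fun h => lt_irrefl a (has a h)
  have hba : b a = 0 := hbs a ha
  set R := ∑ j ∈ univ.erase a, f j (b j + splitLength s j)
  set S := ∑ j ∈ univ.erase a, f j (b j)
  have hgap : f a (1 / 3) - f a (2 / 3) ≤ S - R := by
    have hrate := ((hf a).2 (1 / 3) (by norm_num) (2 / 3) (by norm_num) (by norm_num)).2
    have hwidth := (hmM a).trans (Brackets.le_sum_width ⟨hb, hbs, hlo, hhi⟩ hf has)
    rw [sum_sub_distrib] at hwidth
    linarith
  have hlo : R + f a 1 ≤ t := by
    rw [← add_sum_erase _ _ (mem_univ a), hba, splitLength, if_neg ha, zero_add] at hlo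
    linarith
  have hhi : t ≤ S + f a 0 := by
    rw [← add_sum_erase _ _ (mem_univ a), hba] at hhi
    linarith
  obtain ⟨β, hβ, hloβ, hhiβ⟩ := exists_outer_third_of_gap_le hgap hlo hhi
  have hupd : ∀ j ∈ univ.erase a, Function.update b a β j = b j := fun j hj =>
    Function.update_of_ne (ne_of_mem_erase hj) _ _
  refine ⟨Function.update b a β, fun i => ?_, fun i hi => ?_, ?_, ?_⟩
  · rcases eq_or_ne i a with rfl | hia
    · simpa using hβ
    · simpa [hia] using hb i
  · rw [Finset.mem_insert, not_or] at hi
    simpa [hi.1] using hbs i hi.2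
  · rw [← add_sum_erase _ _ (mem_univ a), Function.update_self, splitLength,
      if_pos (mem_insert_self a s), sum_congr rfl fun j hj => ?_]
    · exact (add_comm _ _).trans_le hloβ
    · simp only [hupd j hj, splitLength, Finset.mem_insert, ne_of_mem_erase hj, false_or]
  · rw [← add_sum_erase _ _ (mem_univ a), sum_congr rfl fun j hj => by rw [hupd j hj],
      Function.update_self]
    exact hhiβ.trans_eq (add_comm _ _)

theorem exists_split_into_outer_thirds (hf : ∀ i, DecreasingAtRate (m i) (M i) (f i))
    (hmM : SequentialGapCondition m M) (h1 : ∑ i, f i 1 ≤ t) (h0 : t ≤ ∑ i, f i 0) :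
    ∃ b : ι → ℝ, (∀ i, b i = 0 ∨ b i = 2 / 3) ∧
      ∑ i, f i (b i + 1 / 3) ≤ t ∧ t ≤ ∑ i, f i (b i) := by
  suffices ∀ s : Finset ι, ∃ b, Brackets f t s b by
    obtain ⟨b, hb, -, hlo, hhi⟩ := this univ
    exact ⟨b, hb, by simpa [splitLength] using hlo, hhi⟩
  intro s
  induction s using Finset.induction_on_max with
  | empty => exact ⟨0, fun _ => Or.inl rfl, fun _ _ => rfl, by simpa [splitLength] using h1,
      by simpa using h0⟩
  | insert a s has ih =>
    obtain ⟨b, hb⟩ := ih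
    exact hb.exists_insert hf hmM has

theorem exists_mem_preCantorSet_sum_eq (hf : ∀ i, DecreasingAtRate (m i) (M i) (f i))
    (hmM : SequentialGapCondition m M) (h1 : ∑ i, f i 1 ≤ t) (h0 : t ≤ ∑ i, f i 0) (k : ℕ) :
    ∃ c : ι → ℝ, (∀ i, c i ∈ preCantorSet k) ∧ ∑ i, f i (c i) = t := by
  induction k generalizing f t with
  | zero =>
    have hcont : ContinuousOn (fun x => ∑ i, f i x) (Icc 0 1) :=
      continuousOn_finsetSum _ fun i _ => (hf i).continuousOn
    obtain ⟨x, hx, hxt⟩ := intermediate_value_Icc' zero_le_one hcont ⟨h1, h0⟩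
    exact ⟨fun _ => x, fun _ => hx, hxt⟩
  | succ k ih =>
    obtain ⟨b, hb, hlo, hhi⟩ := exists_split_into_outer_thirds hf hmM h1 h0
    have hbIcc : ∀ i, b i ∈ Icc (0 : ℝ) (2 / 3) := fun i => by
      rcases hb i with h | h <;> rw [h] <;> norm_num
    obtain ⟨c, hc, hsum⟩ := ih (f := fun i x => 3 * f i (b i + x / 3)) (t := 3 * t)
      (fun i => (hf i).rescale (hbIcc i))
      (by rw [← mul_sum]; linarith) (by simp only [zero_div, add_zero, ← mul_sum]; linarith)
    refine ⟨fun i => b i + c i / 3, fun i => ?_, by rw [← mul_sum] at hsum; linarith⟩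
    rcases hb i with h | h
    · exact Or.inl ⟨c i, hc i, by simp [h]⟩
    · exact Or.inr ⟨c i, hc i, by simp only [h]; ring⟩

theorem exists_cantorSet_sum_eq (hf : ∀ i, DecreasingAtRate (m i) (M i) (f i))
    (hmM : SequentialGapCondition m M) (h1 : ∑ i, f i 1 ≤ t) (h0 : t ≤ ∑ i, f i 0) :
    ∃ c : ι → ℝ, (∀ i, c i ∈ cantorSet) ∧ ∑ i, f i (c i) = t := by
  let K : ℕ → Set (ι → ℝ) := fun k =>
    univ.pi (fun _ => preCantorSet k) ∩ (fun c => ∑ i, f i (c i)) ⁻¹' {t}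
  have hclosed : ∀ k, IsClosed (K k) := fun k =>
    ContinuousOn.preimage_isClosed_of_isClosed
      (continuousOn_finsetSum _ fun i _ => (hf i).continuousOn.comp
        (continuous_apply i).continuousOn fun c hc =>
          preCantorSet_subset_unitInterval (hc i (mem_univ i)))
      (isClosed_set_pi fun _ _ => isClosed_preCantorSet k) isClosed_singleton
  have hanti : ∀ k, K (k + 1) ⊆ K k := fun k c hc =>
    ⟨fun i _ => preCantorSet_antitone k.le_succ (hc.1 i (mem_univ i)), hc.2⟩
  have hne : ∀ k, (K k).Nonempty := fun k => by
    obtain ⟨c, hc, hsum⟩ := exists_mem_preCantorSet_sum_eq hf hmM h1 h0 k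
    exact ⟨c, fun i _ => hc i, hsum⟩
  have hcompact : IsCompact (K 0) :=
    (isCompact_univ_pi fun _ => isCompact_Icc).of_isClosed_subset (hclosed 0) fun c hc => hc.1
  obtain ⟨c, hc⟩ := IsCompact.nonempty_iInter_of_sequence_nonempty_isCompact_isClosed K hanti hne
    hcompact hclosed
  rw [mem_iInter] at hc
  exact ⟨c, fun i => mem_iInter.2 fun k => (hc k).1 i (mem_univ i), (hc 0).2⟩

end CantorSum

theorem decreasingAtRate_three_mul_div_two_add {w : ℝ} (hw : 0 ≤ w) :
    DecreasingAtRate (w / 3) (3 * w / 4) (fun x => 3 * w / (2 + x)) := by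
  refine ⟨by positivity, fun x hx y hy hxy => ?_⟩
  obtain ⟨hx0, hx1⟩ := hx
  obtain ⟨hy0, hy1⟩ := hy
  have hd : 0 ≤ w * (y - x) := mul_nonneg hw (sub_nonneg.2 hxy)
  have hsub : 3 * w / (2 + x) - 3 * w / (2 + y) = 3 * (w * (y - x)) / ((2 + x) * (2 + y)) := by
    field_simp
    ring
  rw [hsub, le_div_iff₀ (by positivity), div_le_iff₀ (by positivity)]
  have h9 : (2 + x) * (2 + y) ≤ 9 := by nlinarith
  have h4 : 4 ≤ (2 + x) * (2 + y) := by nlinarith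
  constructor <;> nlinarith [mul_le_mul_of_nonneg_left h9 hd, mul_le_mul_of_nonneg_left h4 hd]

theorem div_three_mem_cantorSet {x : ℝ} (hx : x ∈ cantorSet) : x / 3 ∈ cantorSet := by
  rw [cantorSet_eq_union_halves]
  exact Or.inl ⟨x, hx, rfl⟩

theorem two_add_div_three_mem_cantorSet {x : ℝ} (hx : x ∈ cantorSet) :
    (2 + x) / 3 ∈ cantorSet := by
  rw [cantorSet_eq_union_halves]
  exact Or.inr ⟨x, hx, rfl⟩

theorem div_three_pow_mem_cantorSet {x : ℝ} (hx : x ∈ cantorSet) (k : ℕ) :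
    x / 3 ^ k ∈ cantorSet := by
  induction k with
  | zero => simpa using hx
  | succ k ih =>
    rw [pow_succ, ← div_div]
    exact div_three_mem_cantorSet ih

theorem exists_cantorSet_sum_inv_eq {ι : Type*} [Fintype ι] [LinearOrder ι] (e : ι → ℕ)
    (he : SequentialGapCondition (fun i => (3 : ℝ) ^ e i / 3) (fun i => 3 * 3 ^ e i / 4))
    (k : ℕ) {W s : ℝ} (hW : ∑ i, (3 : ℝ) ^ e i = W) (h1 : W ≤ s) (h0 : s ≤ 3 / 2 * W) :
    ∃ x : ι → ℝ, (∀ i, x i ∈ cantorSet ∧ x i ≠ 0) ∧ ∑ i, 1 / x i = 3 ^ k * s := by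
  obtain ⟨c, hc, hsum⟩ := exists_cantorSet_sum_eq (f := fun i x => 3 * 3 ^ e i / (2 + x)) (t := s)
    (fun i => decreasingAtRate_three_mul_div_two_add (by positivity)) he
    (by norm_num [hW, h1]) (by rw [← hW, mul_sum] at h0; convert h0 using 2; ring)
  have hc0 : ∀ i, 0 ≤ c i := fun i => (cantorSet_subset_unitInterval (hc i)).1
  refine ⟨fun i => (2 + c i) / 3 / 3 ^ (k + e i), fun i => ⟨?_, ?_⟩, ?_⟩
  · exact div_three_pow_mem_cantorSet (two_add_div_three_mem_cantorSet (hc i)) _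
  · have := hc0 i
    positivity
  · rw [← hsum, mul_sum]
    refine sum_congr rfl fun i _ => ?_
    have := hc0 i
    field_simp
    ring

theorem exists_cantorSet_four_inv_sum_eq {s : ℝ} (h4 : 4 ≤ s) (h12 : s ≤ 12) (k : ℕ) :
    ∃ x : Fin 4 → ℝ, (∀ i, x i ∈ cantorSet ∧ x i ≠ 0) ∧ ∑ i, 1 / x i = 3 ^ k * s := by
  have gap : ∀ e : Fin 4 → ℕ, e = ![0, 0, 0, 0] ∨ e = ![1, 0, 0, 0] ∨ e = ![1, 1, 0, 0] →
      SequentialGapCondition (fun i => (3 : ℝ) ^ e i / 3) (fun i => 3 * 3 ^ e i / 4) := by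
    rintro e (rfl | rfl | rfl) <;> intro i <;> fin_cases i <;>
      simp only [sum_erase_eq_sub (mem_univ _), Fin.sum_univ_four, Matrix.cons_val,
        Fin.reduceFinMk, Fin.reduceLT, Fin.isValue] <;> norm_num
  rcases le_or_gt s 6 with h6 | h6
  · exact exists_cantorSet_sum_inv_eq _ (gap _ (Or.inl rfl)) k (W := 4)
      (by simp only [Fin.sum_univ_four, Matrix.cons_val]; norm_num) h4 (by linarith)
  rcases le_or_gt s 8 with h8 | h8
  · exact exists_cantorSet_sum_inv_eq _ (gap _ (Or.inr (Or.inl rfl))) k (W := 6)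
      (by simp only [Fin.sum_univ_four, Matrix.cons_val]; norm_num) h6.le (by linarith)
  · exact exists_cantorSet_sum_inv_eq _ (gap _ (Or.inr (Or.inr rfl))) k (W := 8)
      (by simp only [Fin.sum_univ_four, Matrix.cons_val]; norm_num) h8.le (by linarith)

theorem one_le_one_div_of_mem_cantorSet {x : ℝ} (hx : x ∈ cantorSet) (hx0 : x ≠ 0) :
    1 ≤ 1 / x :=
  one_le_one_div ((cantorSet_subset_unitInterval hx).1.lt_of_ne' hx0)
    (cantorSet_subset_unitInterval hx).2

/-- An Erdős–Straus-type theorem on the middle-third Cantor set: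
`1/C + 1/C + 1/C + 1/C = [4, ∞)`. -/
theorem four_reciprocals_of_cantorSet_eq_Ici_four :
    {y : ℝ | ∃ x₁ ∈ cantorSet, ∃ x₂ ∈ cantorSet, ∃ x₃ ∈ cantorSet, ∃ x₄ ∈ cantorSet,
        x₁ ≠ 0 ∧ x₂ ≠ 0 ∧ x₃ ≠ 0 ∧ x₄ ≠ 0 ∧
        y = 1 / x₁ + 1 / x₂ + 1 / x₃ + 1 / x₄}
      = Set.Ici (4 : ℝ) := by
  ext y
  simp only [Set.mem_ofPred_eq, Set.mem_Ici]
  constructor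
  · rintro ⟨x₁, h₁, x₂, h₂, x₃, h₃, x₄, h₄, n₁, n₂, n₃, n₄, rfl⟩
    linarith [one_le_one_div_of_mem_cantorSet h₁ n₁, one_le_one_div_of_mem_cantorSet h₂ n₂,
      one_le_one_div_of_mem_cantorSet h₃ n₃, one_le_one_div_of_mem_cantorSet h₄ n₄]
  · intro hy
    obtain ⟨k, hk, hk'⟩ := exists_nat_pow_near (by linarith : 1 ≤ y / 4) (by norm_num : (1 : ℝ) < 3)
    have h3k : (0 : ℝ) < 3 ^ k := by positivity
    obtain ⟨x, hx, hsum⟩ := exists_cantorSet_four_inv_sum_eq (s := y / 3 ^ k)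
      (by rw [le_div_iff₀ h3k]; linarith) (by rw [div_le_iff₀ h3k]; rw [pow_succ] at hk'; linarith) k
    refine ⟨x 0, (hx 0).1, x 1, (hx 1).1, x 2, (hx 2).1, x 3, (hx 3).1,
      (hx 0).2, (hx 1).2, (hx 2).2, (hx 3).2, ?_⟩
    rw [Fin.sum_univ_four, mul_div_cancel₀ _ h3k.ne'] at hsum
    exact hsum.symm
end

section
/- Let C be the middle-third Cantor set. Then {1/x + 1/y + 1/z : x, y, z ∈ C, x, y, z ≠ 0} ⊆ [3, 9/2] ∪ [5, ∞), and {1/x + 1/y : x, y ∈ C, x, y ≠ 0} ⊆ [2, 3] ∪ [4, ∞). In particular, since 3 and 5 belong to the first set and 2 and 4 belong to the second, neither set is an interval (neither set is order-connected). -/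
/-!
A nonzero point of the Cantor set lies in `(0, 1/3]` or in `[2/3, 1]`, so its reciprocal lies in
`[1, 3/2]` or in `[3, ∞)`. A sum of two or three such reciprocals is therefore at most `3`
(resp. `9/2`) when all of them are at most `3/2`, and at least `4` (resp. `5`) otherwise. The
points `1` and `1/3` of the Cantor set realise both sides of each gap.
-/

open Set

lemma one_mem_preCantorSet (n : ℕ) : (1 : ℝ) ∈ preCantorSet n := by
  induction n with
  | zero => simp
  | succ n ih => exact Or.inr ⟨1, ih, by norm_num⟩

lemma one_mem_cantorSet : (1 : ℝ) ∈ cantorSet :=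
  mem_iInter.mpr one_mem_preCantorSet

lemma one_third_mem_cantorSet : (1 / 3 : ℝ) ∈ cantorSet :=
  cantorSet_eq_union_halves ▸ Or.inl ⟨1, one_mem_cantorSet, by norm_num⟩

lemma cantorSet_subset_Icc_union_Icc : cantorSet ⊆ Icc 0 (1 / 3) ∪ Icc (2 / 3) 1 := by
  rw [cantorSet_eq_union_halves]
  rintro _ (⟨x, hx, rfl⟩ | ⟨x, hx, rfl⟩) <;>
    obtain ⟨hx₀, hx₁⟩ := cantorSet_subset_unitInterval hx
  · exact Or.inl ⟨by linarith, by linarith⟩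
  · exact Or.inr ⟨by linarith, by linarith⟩

lemma one_div_mem_of_mem_cantorSet {x : ℝ} (hx : x ∈ cantorSet) (hx₀ : x ≠ 0) :
    1 / x ∈ Icc 1 (3 / 2) ∪ Ici 3 := by
  rcases cantorSet_subset_Icc_union_Icc hx with ⟨hx_nonneg, hx_le⟩ | ⟨hx_ge, hx_le⟩
  · have hpos : 0 < x := hx_nonneg.lt_of_ne' hx₀
    exact Or.inr ((le_div_iff₀ hpos).2 (by linarith))
  · have hpos : 0 < x := by linarith
    exact Or.inl ⟨(le_div_iff₀ hpos).2 (by linarith), (div_le_iff₀ hpos).2 (by linarith)⟩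

lemma add_mem_Icc_union_Ici {a b c a' b' c' x y : ℝ} (hx : x ∈ Icc a b ∪ Ici c)
    (hy : y ∈ Icc a' b' ∪ Ici c') (hac : a' ≤ c') :
    x + y ∈ Icc (a + a') (b + b') ∪ Ici (min (c + a') (a + c')) := by
  rcases hx with ⟨hax, hxb⟩ | (hcx : c ≤ x) <;> rcases hy with ⟨hay, hyb⟩ | (hcy : c' ≤ y)
  · exact Or.inl ⟨by linarith, by linarith⟩
  · exact Or.inr (mem_Ici.2 (min_le_of_right_le (by linarith)))
  · exact Or.inr (mem_Ici.2 (min_le_of_left_le (by linarith)))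
  · exact Or.inr (mem_Ici.2 (min_le_of_left_le (by linarith)))

lemma Set.not_ordConnected_of_subset_Iic_union_Ici {α : Type*} [LinearOrder α]
    [DenselyOrdered α] {s : Set α} {a b x y : α} (hs : s ⊆ Iic a ∪ Ici b) (hab : a < b)
    (hx : x ∈ s) (hy : y ∈ s) (hxa : x ≤ a) (hby : b ≤ y) : ¬ s.OrdConnected := by
  intro hconn
  obtain ⟨z, haz, hzb⟩ := exists_between hab
  rcases hs (hconn.out hx hy ⟨hxa.trans haz.le, hzb.le.trans hby⟩) with hza | hbz
  · exact (not_le.2 haz) hza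
  · exact (not_le.2 hzb) hbz

def cantorReciprocalSums₂ : Set ℝ :=
  {y | ∃ x₁ ∈ cantorSet, ∃ x₂ ∈ cantorSet, x₁ ≠ 0 ∧ x₂ ≠ 0 ∧ y = 1 / x₁ + 1 / x₂}

def cantorReciprocalSums₃ : Set ℝ :=
  {y | ∃ x₁ ∈ cantorSet, ∃ x₂ ∈ cantorSet, ∃ x₃ ∈ cantorSet,
    x₁ ≠ 0 ∧ x₂ ≠ 0 ∧ x₃ ≠ 0 ∧ y = 1 / x₁ + 1 / x₂ + 1 / x₃}

lemma one_div_add_one_div_mem_of_mem_cantorSet {x₁ x₂ : ℝ} (h₁ : x₁ ∈ cantorSet)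
    (h₂ : x₂ ∈ cantorSet) (h₁₀ : x₁ ≠ 0) (h₂₀ : x₂ ≠ 0) : 1 / x₁ + 1 / x₂ ∈ Icc 2 3 ∪ Ici 4 := by
  convert add_mem_Icc_union_Ici (one_div_mem_of_mem_cantorSet h₁ h₁₀)
    (one_div_mem_of_mem_cantorSet h₂ h₂₀) (by norm_num) using 3 <;> norm_num

lemma cantorReciprocalSums₂_subset : cantorReciprocalSums₂ ⊆ Icc 2 3 ∪ Ici 4 := by
  rintro _ ⟨x₁, h₁, x₂, h₂, h₁₀, h₂₀, rfl⟩
  exact one_div_add_one_div_mem_of_mem_cantorSet h₁ h₂ h₁₀ h₂₀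

lemma cantorReciprocalSums₃_subset : cantorReciprocalSums₃ ⊆ Icc 3 (9 / 2) ∪ Ici 5 := by
  rintro _ ⟨x₁, h₁, x₂, h₂, x₃, h₃, h₁₀, h₂₀, h₃₀, rfl⟩
  convert add_mem_Icc_union_Ici (one_div_add_one_div_mem_of_mem_cantorSet h₁ h₂ h₁₀ h₂₀)
    (one_div_mem_of_mem_cantorSet h₃ h₃₀) (by norm_num) using 3 <;> norm_num

/-- Sharpness: `1/C + 1/C + 1/C ⊆ [3, 9/2] ∪ [5, ∞)` and `1/C + 1/C ⊆ [2, 3] ∪ [4, ∞)`;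
since `3, 5` belong to the first set and `2, 4` to the second, neither set is
order-connected (an interval). -/
theorem three_and_two_reciprocals_of_cantorSet_not_interval :
    {y : ℝ | ∃ x₁ ∈ cantorSet, ∃ x₂ ∈ cantorSet, ∃ x₃ ∈ cantorSet,
        x₁ ≠ 0 ∧ x₂ ≠ 0 ∧ x₃ ≠ 0 ∧ y = 1 / x₁ + 1 / x₂ + 1 / x₃}
      ⊆ Set.Icc (3 : ℝ) (9 / 2) ∪ Set.Ici (5 : ℝ) ∧
    {y : ℝ | ∃ x₁ ∈ cantorSet, ∃ x₂ ∈ cantorSet,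
        x₁ ≠ 0 ∧ x₂ ≠ 0 ∧ y = 1 / x₁ + 1 / x₂}
      ⊆ Set.Icc (2 : ℝ) 3 ∪ Set.Ici (4 : ℝ) ∧
    (3 : ℝ) ∈ {y : ℝ | ∃ x₁ ∈ cantorSet, ∃ x₂ ∈ cantorSet, ∃ x₃ ∈ cantorSet,
        x₁ ≠ 0 ∧ x₂ ≠ 0 ∧ x₃ ≠ 0 ∧ y = 1 / x₁ + 1 / x₂ + 1 / x₃} ∧
    (5 : ℝ) ∈ {y : ℝ | ∃ x₁ ∈ cantorSet, ∃ x₂ ∈ cantorSet, ∃ x₃ ∈ cantorSet,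
        x₁ ≠ 0 ∧ x₂ ≠ 0 ∧ x₃ ≠ 0 ∧ y = 1 / x₁ + 1 / x₂ + 1 / x₃} ∧
    (2 : ℝ) ∈ {y : ℝ | ∃ x₁ ∈ cantorSet, ∃ x₂ ∈ cantorSet,
        x₁ ≠ 0 ∧ x₂ ≠ 0 ∧ y = 1 / x₁ + 1 / x₂} ∧
    (4 : ℝ) ∈ {y : ℝ | ∃ x₁ ∈ cantorSet, ∃ x₂ ∈ cantorSet,
        x₁ ≠ 0 ∧ x₂ ≠ 0 ∧ y = 1 / x₁ + 1 / x₂} ∧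
    ¬ ({y : ℝ | ∃ x₁ ∈ cantorSet, ∃ x₂ ∈ cantorSet, ∃ x₃ ∈ cantorSet,
        x₁ ≠ 0 ∧ x₂ ≠ 0 ∧ x₃ ≠ 0 ∧ y = 1 / x₁ + 1 / x₂ + 1 / x₃}).OrdConnected ∧
    ¬ ({y : ℝ | ∃ x₁ ∈ cantorSet, ∃ x₂ ∈ cantorSet,
        x₁ ≠ 0 ∧ x₂ ≠ 0 ∧ y = 1 / x₁ + 1 / x₂}).OrdConnected := by
  have sub₃ := cantorReciprocalSums₃_subset
  have sub₂ := cantorReciprocalSums₂_subset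
  have one_ne : (1 : ℝ) ≠ 0 := one_ne_zero
  have third_ne : (1 / 3 : ℝ) ≠ 0 := by norm_num
  have mem₃ : (3 : ℝ) ∈ cantorReciprocalSums₃ := ⟨1, one_mem_cantorSet, 1, one_mem_cantorSet,
    1, one_mem_cantorSet, one_ne, one_ne, one_ne, by norm_num⟩
  have mem₅ : (5 : ℝ) ∈ cantorReciprocalSums₃ := ⟨1 / 3, one_third_mem_cantorSet,
    1, one_mem_cantorSet, 1, one_mem_cantorSet, third_ne, one_ne, one_ne, by norm_num⟩
  have mem₂ : (2 : ℝ) ∈ cantorReciprocalSums₂ :=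
    ⟨1, one_mem_cantorSet, 1, one_mem_cantorSet, one_ne, one_ne, by norm_num⟩
  have mem₄ : (4 : ℝ) ∈ cantorReciprocalSums₂ :=
    ⟨1 / 3, one_third_mem_cantorSet, 1, one_mem_cantorSet, third_ne, one_ne, by norm_num⟩
  refine ⟨sub₃, sub₂, mem₃, mem₅, mem₂, mem₄, ?_, ?_⟩
  · exact Set.not_ordConnected_of_subset_Iic_union_Ici
      (sub₃.trans (union_subset_union_left _ Icc_subset_Iic_self)) (by norm_num) mem₃ mem₅
      (by norm_num) le_rfl
  · exact Set.not_ordConnected_of_subset_Iic_union_Ici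
      (sub₂.trans (union_subset_union_left _ Icc_subset_Iic_self)) (by norm_num) mem₂ mem₄
      (by norm_num) le_rfl
end

section
/- Let C be the middle-third Cantor set. Then {1/x₁ + 1/x₂ + 1/x₃ + 1/x₄ : x₁, x₂, x₃, x₄ ∈ C ∩ [2/3, 1]} = [4, 6]. -/
/-!
Write `x = (2 + c) / 3` with `c ∈ C`, so that `1 / x = 3 / (2 + c)`, a decreasing function of
`c ∈ [0, 1]` with slope between `-3 / 4` and `-1 / 3`. Suppose `y` lies in the sum of the images of
four level-`n` Cantor intervals of length `δ`. Replace one of them by its left or right third: the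
image of the removed middle third has length at most `δ / 4`, while the other three images have
total length at least `δ / 3`, so one of the two choices still captures `y`. Doing this for every
coordinate and every `n`, `y` is a value of `∑ 3 / (2 + cⱼ)` with `cⱼ ∈ preCantorSet n` for each
`n`, and by compactness with `cⱼ ∈ C`.
-/

open Set

theorem mem_image_iInter_of_antitone {X Y : Type*} [TopologicalSpace X] [TopologicalSpace Y]
    [T1Space Y] {K : ℕ → Set X} (hK : Antitone K) (hK₀ : IsCompact (K 0))
    (hKc : ∀ n, IsClosed (K n)) {f : X → Y} (hf : ContinuousOn f (K 0)) {y : Y}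
    (hy : ∀ n, y ∈ f '' K n) : y ∈ f '' ⋂ n, K n := by
  have hclosed n : IsClosed (K n ∩ f ⁻¹' {y}) :=
    (hf.mono (hK n.zero_le)).preimage_isClosed_of_isClosed (hKc n) isClosed_singleton
  obtain ⟨x, hx⟩ := IsCompact.nonempty_iInter_of_sequence_nonempty_isCompact_isClosed
    (fun n ↦ K n ∩ f ⁻¹' {y}) (fun n ↦ inter_subset_inter_left _ (hK n.le_succ))
    (fun n ↦ let ⟨x, hx, hfx⟩ := hy n; ⟨x, hx, hfx⟩)
    (hK₀.of_isClosed_subset (hclosed 0) inter_subset_left) hclosed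
  simp only [mem_iInter, mem_inter_iff, mem_preimage, mem_singleton_iff] at hx
  exact ⟨x, mem_iInter.2 fun n ↦ (hx n).1, (hx 0).2⟩

/-- `1 / x` at the point `x = (2 + c) / 3` of the right half of the Cantor set. -/
noncomputable def cantorRecip (c : ℝ) : ℝ := 3 / (2 + c)

namespace cantorRecip

variable {x z : ℝ}

theorem sub_eq (hx : 0 ≤ x) (hz : 0 ≤ z) :
    cantorRecip x - cantorRecip z = 3 * (z - x) / ((2 + x) * (2 + z)) := by
  unfold cantorRecip
  field_simp
  ring

theorem sub_le (hx : 0 ≤ x) (hxz : x ≤ z) :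
    cantorRecip x - cantorRecip z ≤ 3 / 4 * (z - x) := by
  have hz := hx.trans hxz
  rw [sub_eq hx hz, div_le_iff₀ (by positivity)]
  nlinarith [mul_nonneg (sub_nonneg.2 hxz) (mul_nonneg hx hz)]

theorem le_sub (hx : 0 ≤ x) (hxz : x ≤ z) (hz : z ≤ 1) :
    (z - x) / 3 ≤ cantorRecip x - cantorRecip z := by
  have hz₀ := hx.trans hxz
  have hprod : (2 + x) * (2 + z) ≤ 9 := by nlinarith
  rw [sub_eq hx hz₀, div_le_div_iff₀ (by norm_num) (by positivity)]
  nlinarith [mul_nonneg (sub_nonneg.2 hxz) (sub_nonneg.2 hprod)]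

theorem continuousOn_Ici : ContinuousOn cantorRecip (Ici 0) :=
  continuousOn_const.div (continuousOn_const.add continuousOn_id) fun c (hc : 0 ≤ c) ↦ by
    positivity

end cantorRecip

/-- The left endpoints of the `2 ^ n` intervals of length `3⁻¹ ^ n` making up `preCantorSet n`. -/
def cantorLeftEnds : ℕ → Set ℝ
  | 0 => {0}
  | n + 1 => (· / 3) '' cantorLeftEnds n ∪ (fun x ↦ (2 + x) / 3) '' cantorLeftEnds n

namespace cantorLeftEnds

variable {n : ℕ} {a : ℝ}

theorem Icc_subset_preCantorSet (ha : a ∈ cantorLeftEnds n) :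
    Icc a (a + 3⁻¹ ^ n) ⊆ preCantorSet n := by
  induction n generalizing a with
  | zero => simp_all [cantorLeftEnds]
  | succ n ih =>
    have hδ := pow_succ (3⁻¹ : ℝ) n
    rcases ha with ⟨b, hb, rfl⟩ | ⟨b, hb, rfl⟩ <;> rintro x ⟨hx₀, hx₁⟩
    · exact Or.inl ⟨3 * x, ih hb ⟨by linarith, by linarith⟩, by ring⟩
    · exact Or.inr ⟨3 * x - 2, ih hb ⟨by linarith, by linarith⟩, by ring⟩

theorem nonneg_and_add_le_one (ha : a ∈ cantorLeftEnds n) : 0 ≤ a ∧ a + 3⁻¹ ^ n ≤ 1 := by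
  have h := preCantorSet_subset_unitInterval.trans' (Icc_subset_preCantorSet ha)
  exact ⟨(h (left_mem_Icc.2 (by simp))).1, (h (right_mem_Icc.2 (by simp))).2⟩

theorem mem_succ (ha : a ∈ cantorLeftEnds n) :
    a ∈ cantorLeftEnds (n + 1) ∧ a + 2 * 3⁻¹ ^ (n + 1) ∈ cantorLeftEnds (n + 1) := by
  induction n generalizing a with
  | zero =>
    obtain rfl : a = 0 := ha
    exact ⟨Or.inl ⟨0, rfl, by norm_num⟩, Or.inr ⟨0, rfl, by norm_num⟩⟩
  | succ n ih =>
    rcases ha with ⟨b, hb, rfl⟩ | ⟨b, hb, rfl⟩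
    · exact ⟨Or.inl ⟨b, (ih hb).1, rfl⟩, Or.inl ⟨_, (ih hb).2, by ring⟩⟩
    · exact ⟨Or.inr ⟨b, (ih hb).1, rfl⟩, Or.inr ⟨_, (ih hb).2, by ring⟩⟩

open cantorRecip

theorem third_le_sub_cantorRecip (ha : a ∈ cantorLeftEnds n) :
    3⁻¹ ^ n / 3 ≤ cantorRecip a - cantorRecip (a + 3⁻¹ ^ n) := by
  obtain ⟨ha₀, ha₁⟩ := nonneg_and_add_le_one ha
  simpa using le_sub ha₀ (by simp) ha₁

theorem exists_succ_of_le_of_le {L U y : ℝ} (ha : a ∈ cantorLeftEnds n)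
    (hLU : 3⁻¹ ^ n / 4 ≤ U - L) (hlo : L + cantorRecip (a + 3⁻¹ ^ n) ≤ y)
    (hhi : y ≤ U + cantorRecip a) :
    ∃ a' ∈ cantorLeftEnds (n + 1),
      L + cantorRecip (a' + 3⁻¹ ^ (n + 1)) ≤ y ∧ y ≤ U + cantorRecip a' := by
  have hδ : (3⁻¹ : ℝ) ^ (n + 1) = 3⁻¹ ^ n / 3 := by rw [pow_succ]; ring
  have hδ₀ : (0 : ℝ) < 3⁻¹ ^ (n + 1) := by positivity
  by_cases hy : y ≤ U + cantorRecip (a + 2 * 3⁻¹ ^ (n + 1))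
  · refine ⟨_, (mem_succ ha).2, ?_, hy⟩
    rwa [show a + 2 * 3⁻¹ ^ (n + 1) + 3⁻¹ ^ (n + 1) = a + 3⁻¹ ^ n by rw [hδ]; ring]
  · have hgap := sub_le (x := a + 3⁻¹ ^ (n + 1)) (z := a + 2 * 3⁻¹ ^ (n + 1))
      (by linarith [(nonneg_and_add_le_one ha).1]) (by linarith)
    exact ⟨a, (mem_succ ha).1, by linarith, hhi⟩

theorem exists_sum_cantorRecip_le_le {y : ℝ} (hy : y ∈ Icc (4 : ℝ) 6) (n : ℕ) :
    ∃ a ∈ cantorLeftEnds n, ∃ b ∈ cantorLeftEnds n, ∃ c ∈ cantorLeftEnds n,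
      ∃ d ∈ cantorLeftEnds n,
      cantorRecip (a + 3⁻¹ ^ n) + cantorRecip (b + 3⁻¹ ^ n) + cantorRecip (c + 3⁻¹ ^ n)
          + cantorRecip (d + 3⁻¹ ^ n) ≤ y ∧
        y ≤ cantorRecip a + cantorRecip b + cantorRecip c + cantorRecip d := by
  induction n with
  | zero =>
    refine ⟨0, rfl, 0, rfl, 0, rfl, 0, rfl, ?_⟩
    norm_num [cantorRecip]
    exact hy
  | succ n ih =>
    obtain ⟨a, ha, b, hb, c, hc, d, hd, hlo, hhi⟩ := ih
    have hδ : (3⁻¹ : ℝ) ^ (n + 1) = 3⁻¹ ^ n / 3 := by rw [pow_succ]; ring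
    have hδ₀ : (0 : ℝ) < 3⁻¹ ^ n := by positivity
    have la := third_le_sub_cantorRecip ha
    have lb := third_le_sub_cantorRecip hb
    have lc := third_le_sub_cantorRecip hc
    have ld := third_le_sub_cantorRecip hd
    obtain ⟨a', ha', hloa, hhia⟩ := exists_succ_of_le_of_le (y := y) ha
      (L := cantorRecip (b + 3⁻¹ ^ n) + cantorRecip (c + 3⁻¹ ^ n) + cantorRecip (d + 3⁻¹ ^ n))
      (U := cantorRecip b + cantorRecip c + cantorRecip d) (by linarith) (by linarith) (by linarith)
    have la' := third_le_sub_cantorRecip ha'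
    obtain ⟨b', hb', hlob, hhib⟩ := exists_succ_of_le_of_le (y := y) hb
      (L := cantorRecip (a' + 3⁻¹ ^ (n + 1)) + cantorRecip (c + 3⁻¹ ^ n)
        + cantorRecip (d + 3⁻¹ ^ n))
      (U := cantorRecip a' + cantorRecip c + cantorRecip d) (by linarith) (by linarith)
      (by linarith)
    have lb' := third_le_sub_cantorRecip hb'
    obtain ⟨c', hc', hloc, hhic⟩ := exists_succ_of_le_of_le (y := y) hc
      (L := cantorRecip (a' + 3⁻¹ ^ (n + 1)) + cantorRecip (b' + 3⁻¹ ^ (n + 1))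
        + cantorRecip (d + 3⁻¹ ^ n))
      (U := cantorRecip a' + cantorRecip b' + cantorRecip d) (by linarith) (by linarith)
      (by linarith)
    have lc' := third_le_sub_cantorRecip hc'
    obtain ⟨d', hd', hlod, hhid⟩ := exists_succ_of_le_of_le (y := y) hd
      (L := cantorRecip (a' + 3⁻¹ ^ (n + 1)) + cantorRecip (b' + 3⁻¹ ^ (n + 1))
        + cantorRecip (c' + 3⁻¹ ^ (n + 1)))
      (U := cantorRecip a' + cantorRecip b' + cantorRecip c') (by linarith) (by linarith)
      (by linarith)
    exact ⟨a', ha', b', hb', c', hc', d', hd', by linarith, by linarith⟩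

theorem mem_image_preCantorSet {y : ℝ} (hy : y ∈ Icc (4 : ℝ) 6) (n : ℕ) :
    y ∈ (fun c : Fin 4 → ℝ ↦ ∑ j, cantorRecip (c j)) '' univ.pi fun _ ↦ preCantorSet n := by
  obtain ⟨a, ha, b, hb, c, hc, d, hd, hlo, hhi⟩ := exists_sum_cantorRecip_le_le hy n
  have hR {p : ℝ} (hp : p ∈ cantorLeftEnds n) :
      ContinuousOn (fun t ↦ cantorRecip (p + t)) (Icc 0 (3⁻¹ ^ n)) :=
    continuousOn_Ici.comp (continuousOn_const.add continuousOn_id) fun t ht ↦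
      add_nonneg (nonneg_and_add_le_one hp).1 ht.1
  have hmem {p t : ℝ} (hp : p ∈ cantorLeftEnds n) (ht : t ∈ Icc 0 (3⁻¹ ^ n)) :
      p + t ∈ preCantorSet n :=
    Icc_subset_preCantorSet hp ⟨le_add_of_nonneg_right ht.1, add_le_add_right ht.2 p⟩
  obtain ⟨t, ht, hty⟩ := intermediate_value_Icc' (by positivity)
    ((((hR ha).add (hR hb)).add (hR hc)).add (hR hd)) (by simpa using And.intro hlo hhi)
  refine ⟨![a + t, b + t, c + t, d + t], ?_, by simpa [Fin.sum_univ_four] using hty⟩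
  simp only [mem_pi, mem_univ, forall_const, Fin.forall_fin_succ, IsEmpty.forall_iff, and_true]
  exact ⟨hmem ha ht, hmem hb ht, hmem hc ht, hmem hd ht⟩

end cantorLeftEnds

theorem exists_cantorSet_sum_cantorRecip_eq {y : ℝ} (hy : y ∈ Icc (4 : ℝ) 6) :
    ∃ c : Fin 4 → ℝ, (∀ j, c j ∈ cantorSet) ∧ ∑ j, cantorRecip (c j) = y := by
  have hcont : ContinuousOn (fun c : Fin 4 → ℝ ↦ ∑ j, cantorRecip (c j))
      (univ.pi fun _ ↦ Ici 0) :=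
    continuousOn_finsetSum _ fun j _ ↦ cantorRecip.continuousOn_Ici.comp
      (continuous_apply j).continuousOn fun _ hc ↦ hc j (mem_univ j)
  obtain ⟨c, hc, rfl⟩ := mem_image_iInter_of_antitone
    (fun _ _ hmn ↦ pi_mono fun _ _ ↦ preCantorSet_antitone hmn)
    (isCompact_univ_pi fun _ ↦ isCompact_Icc)
    (fun n ↦ isClosed_set_pi fun _ _ ↦ isClosed_preCantorSet n)
    (hcont.mono (pi_mono fun _ _ _ hc ↦ hc.1))
    (cantorLeftEnds.mem_image_preCantorSet hy)
  simp only [mem_iInter, mem_pi, mem_univ, forall_const] at hc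
  exact ⟨c, fun j ↦ mem_iInter.2 fun n ↦ hc n j, rfl⟩

theorem one_div_mem_Icc_of_mem_Icc {x : ℝ} (hx : x ∈ Icc (2 / 3 : ℝ) 1) :
    1 / x ∈ Icc (1 : ℝ) (3 / 2) := by
  have hx₀ : 0 < x := by linarith [hx.1]
  constructor
  · rw [le_div_iff₀ hx₀]; linarith [hx.2]
  · rw [div_le_iff₀ hx₀]; linarith [hx.1]

theorem two_add_div_three_mem_cantorSet_inter_Icc {c : ℝ} (hc : c ∈ cantorSet) :
    (2 + c) / 3 ∈ cantorSet ∩ Icc (2 / 3 : ℝ) 1 := by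
  obtain ⟨hc₀, hc₁⟩ := cantorSet_subset_unitInterval hc
  refine ⟨?_, by linarith, by linarith⟩
  rw [cantorSet_eq_union_halves]
  exact Or.inr ⟨c, hc, rfl⟩

theorem four_reciprocals_cantorSet_inter_Icc_two_thirds_one :
    {y : ℝ | ∃ x₁ ∈ cantorSet ∩ Set.Icc (2 / 3 : ℝ) 1,
        ∃ x₂ ∈ cantorSet ∩ Set.Icc (2 / 3 : ℝ) 1,
        ∃ x₃ ∈ cantorSet ∩ Set.Icc (2 / 3 : ℝ) 1,
        ∃ x₄ ∈ cantorSet ∩ Set.Icc (2 / 3 : ℝ) 1,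
        y = 1 / x₁ + 1 / x₂ + 1 / x₃ + 1 / x₄}
      = Set.Icc (4 : ℝ) 6 := by
  ext y
  constructor
  · rintro ⟨x₁, ⟨-, h₁⟩, x₂, ⟨-, h₂⟩, x₃, ⟨-, h₃⟩, x₄, ⟨-, h₄⟩, rfl⟩
    have b₁ := one_div_mem_Icc_of_mem_Icc h₁
    have b₂ := one_div_mem_Icc_of_mem_Icc h₂
    have b₃ := one_div_mem_Icc_of_mem_Icc h₃
    have b₄ := one_div_mem_Icc_of_mem_Icc h₄
    constructor <;> linarith [b₁.1, b₂.1, b₃.1, b₄.1, b₁.2, b₂.2, b₃.2, b₄.2]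
  · intro hy
    obtain ⟨c, hc, rfl⟩ := exists_cantorSet_sum_cantorRecip_eq hy
    have hx j := two_add_div_three_mem_cantorSet_inter_Icc (hc j)
    refine ⟨_, hx 0, _, hx 1, _, hx 2, _, hx 3, ?_⟩
    simp only [Fin.sum_univ_four, cantorRecip, one_div_div]
end
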